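/- arXiv:2301.12622 — 6 statements merged into one kernel-verified Lean document; each statement's English description precedes it below -/
import Mathlib

section
/- Let U be a 2-dimensional complex vector space, V an m-dimensional complex vector space, I a 1-dimensional complex vector space, and F : Sym³V → I a cubic form. Define the graded vector space g₊ = g₁ ⊕ g₂ ⊕ g₃ with g₁ = U ⊗ V, g₂ = (Λ²U) ⊗ I ⊗ V*, g₃ = (Λ²U) ⊗ I ⊗ U, with brackets [u₁⊗v₁, u₂⊗v₂] = (u₁∧u₂) ⊗ F(v₁,v₂,·), [(u₁∧u₂)⊗v*, u₃⊗v₃] = (u₁∧u₂) ⊗ u₃ ⊗ v*(v₃), all brackets involving g₃ or two elements of g₂ being zero. Then this bracket satisfies the Jacobi identity, so g₊(F) is a graded Lie algebra. -/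
set_option maxHeartbeats 1000000

open TensorProduct Module

private def jacSum {R G : Type*} [CommRing R] [AddCommGroup G] [Module R G]
    (Br : G →ₗ[R] G →ₗ[R] G) (x y z : G) : G :=
  Br (Br x y) z + Br (Br y z) x + Br (Br z x) y

private lemma jacSum_cyc {R G : Type*} [CommRing R] [AddCommGroup G] [Module R G]
    (Br : G →ₗ[R] G →ₗ[R] G) (x y z : G) :
    jacSum Br x y z = jacSum Br y z x := by
  unfold jacSum; abel

private lemma jacSum_add1 {R G : Type*} [CommRing R] [AddCommGroup G] [Module R G]
    (Br : G →ₗ[R] G →ₗ[R] G) (x x' y z : G) :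
    jacSum Br (x + x') y z = jacSum Br x y z + jacSum Br x' y z := by
  unfold jacSum
  simp only [map_add, LinearMap.add_apply]
  abel

private lemma jacSum_add2 {R G : Type*} [CommRing R] [AddCommGroup G] [Module R G]
    (Br : G →ₗ[R] G →ₗ[R] G) (x y y' z : G) :
    jacSum Br x (y + y') z = jacSum Br x y z + jacSum Br x y' z := by
  unfold jacSum
  simp only [map_add, LinearMap.add_apply]
  abel

private lemma jacSum_add3 {R G : Type*} [CommRing R] [AddCommGroup G] [Module R G]
    (Br : G →ₗ[R] G →ₗ[R] G) (x y z z' : G) :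
    jacSum Br x y (z + z') = jacSum Br x y z + jacSum Br x y z' := by
  unfold jacSum
  simp only [map_add, LinearMap.add_apply]
  abel

/-- The graded vector space `g₊ = g₁ ⊕ g₂ ⊕ g₃` with `g₁ = U ⊗ V`,
`g₂ = Λ²U ⊗ I ⊗ V*` (realized as `Λ ⊗ Hom(V, I)` where `Λ` is a
1-dimensional space receiving a universal alternating map `wedge` playing the
role of `Λ²U`), `g₃ = Λ²U ⊗ I ⊗ U` (realized as `Λ ⊗ (I ⊗ U)`), with the
bracket of Definition 3.13: the bracket satisfies the Jacobi identity. -/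
theorem stmt0
    (U V I Λ : Type*)
    [AddCommGroup U] [Module ℂ U] [AddCommGroup V] [Module ℂ V]
    [AddCommGroup I] [Module ℂ I] [AddCommGroup Λ] [Module ℂ Λ]
    [FiniteDimensional ℂ U] [FiniteDimensional ℂ V] [FiniteDimensional ℂ I]
    [FiniteDimensional ℂ Λ]
    (hU : finrank ℂ U = 2) (hI : finrank ℂ I = 1) (hΛ : finrank ℂ Λ = 1)
    (wedge : U →ₗ[ℂ] U →ₗ[ℂ] Λ) (hwalt : ∀ u : U, wedge u u = 0)
    (hwne : wedge ≠ 0)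
    -- the cubic form `F : Sym³ V → I`, as a symmetric trilinear map
    (F : V →ₗ[ℂ] V →ₗ[ℂ] V →ₗ[ℂ] I)
    (hFsymm12 : ∀ v₁ v₂ : V, F v₁ v₂ = F v₂ v₁)
    (hFsymm23 : ∀ v₁ v₂ v₃ : V, F v₁ v₂ v₃ = F v₁ v₃ v₂)
    -- the bracket on `g₊ = g₁ × g₂ × g₃`
    (Br : ((U ⊗[ℂ] V) × (Λ ⊗[ℂ] (V →ₗ[ℂ] I)) × (Λ ⊗[ℂ] (I ⊗[ℂ] U)))
        →ₗ[ℂ] ((U ⊗[ℂ] V) × (Λ ⊗[ℂ] (V →ₗ[ℂ] I)) × (Λ ⊗[ℂ] (I ⊗[ℂ] U)))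
        →ₗ[ℂ] ((U ⊗[ℂ] V) × (Λ ⊗[ℂ] (V →ₗ[ℂ] I)) × (Λ ⊗[ℂ] (I ⊗[ℂ] U))))
    -- antisymmetry
    (hanti : ∀ x y, Br x y = - Br y x)
    -- `[u₁⊗v₁, u₂⊗v₂] = (u₁∧u₂) ⊗ F(v₁,v₂,·)`
    (h11 : ∀ (u₁ : U) (v₁ : V) (u₂ : U) (v₂ : V),
      Br (u₁ ⊗ₜ[ℂ] v₁, 0, 0) (u₂ ⊗ₜ[ℂ] v₂, 0, 0)
        = (0, (wedge u₁ u₂) ⊗ₜ[ℂ] (F v₁ v₂), 0))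
    -- `[(u₁∧u₂)⊗v*, u₃⊗v₃] = (u₁∧u₂) ⊗ u₃ ⊗ v*(v₃)`
    (h21 : ∀ (l : Λ) (f : V →ₗ[ℂ] I) (u₃ : U) (v₃ : V),
      Br (0, l ⊗ₜ[ℂ] f, 0) (u₃ ⊗ₜ[ℂ] v₃, 0, 0)
        = (0, 0, l ⊗ₜ[ℂ] ((f v₃) ⊗ₜ[ℂ] u₃)))
    -- brackets of two elements of `g₂` vanish
    (h22 : ∀ (b b' : Λ ⊗[ℂ] (V →ₗ[ℂ] I)),
      Br (0, b, 0) (0, b', 0) = 0)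
    -- brackets involving `g₃` vanish
    (h3 : ∀ (c : Λ ⊗[ℂ] (I ⊗[ℂ] U)) x, Br (0, 0, c) x = 0) :
    ∀ x y z, Br (Br x y) z + Br (Br y z) x + Br (Br z x) y = 0 := by
  classical
  set G := (U ⊗[ℂ] V) × (Λ ⊗[ℂ] (V →ₗ[ℂ] I)) × (Λ ⊗[ℂ] (I ⊗[ℂ] U)) with hG
  suffices hJ : ∀ x y z : G, jacSum Br x y z = 0 by
    intro x y z; exact hJ x y z
  -- basic consequences
  have hBr0r : ∀ x : G, Br x 0 = 0 := by
    intro x; rw [hanti]; simp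
  have h3r : ∀ (c : Λ ⊗[ℂ] (I ⊗[ℂ] U)) (x : G), Br x (0, 0, c) = 0 := by
    intro c x; rw [hanti, h3, neg_zero]
  have wanti : ∀ u u' : U, wedge u u' = - wedge u' u := by
    intro u u'
    have h := hwalt (u + u')
    simp only [map_add, LinearMap.add_apply, hwalt, zero_add, add_zero] at h
    rw [add_comm] at h
    exact eq_neg_of_add_eq_zero_left h
  -- splitting of product elements
  have hsplit1 : ∀ (a a' : U ⊗[ℂ] V),
      ((a + a', 0, 0) : G) = (a, 0, 0) + (a', 0, 0) := by intro a a'; simp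
  have hsplit2 : ∀ (b b' : Λ ⊗[ℂ] (V →ₗ[ℂ] I)),
      ((0, b + b', 0) : G) = (0, b, 0) + (0, b', 0) := by intro b b'; simp
  have hzero1 : ((0, 0, 0) : G) = 0 := rfl
  -- structural lemmas on the bracket
  have S11 : ∀ a a' : U ⊗[ℂ] V, ∃ b, Br (a, 0, 0) (a', 0, 0) = (0, b, 0) := by
    intro a
    induction a using TensorProduct.induction_on with
    | zero =>
      intro a'
      exact ⟨0, by rw [hzero1, map_zero, LinearMap.zero_apply]⟩
    | tmul u v =>
      intro a'
      induction a' using TensorProduct.induction_on with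
      | zero => exact ⟨0, by rw [hzero1, hBr0r]⟩
      | tmul u' v' => exact ⟨_, h11 u v u' v'⟩
      | add a' a'' ih' ih'' =>
        obtain ⟨b, hb⟩ := ih'
        obtain ⟨b', hb'⟩ := ih''
        refine ⟨b + b', ?_⟩
        rw [hsplit1, map_add, hb, hb']
        simp
    | add a a'' ih ih' =>
      intro a'
      obtain ⟨b, hb⟩ := ih a'
      obtain ⟨b', hb'⟩ := ih' a'
      refine ⟨b + b', ?_⟩
      rw [hsplit1, map_add, LinearMap.add_apply, hb, hb']
      simp
  have S21 : ∀ (b : Λ ⊗[ℂ] (V →ₗ[ℂ] I)) (a : U ⊗[ℂ] V),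
      ∃ c, Br (0, b, 0) (a, 0, 0) = (0, 0, c) := by
    intro b
    induction b using TensorProduct.induction_on with
    | zero =>
      intro a
      exact ⟨0, by rw [hzero1, map_zero, LinearMap.zero_apply]⟩
    | tmul l f =>
      intro a
      induction a using TensorProduct.induction_on with
      | zero => exact ⟨0, by rw [hzero1, hBr0r]⟩
      | tmul u v => exact ⟨_, h21 l f u v⟩
      | add a a' ih ih' =>
        obtain ⟨c, hc⟩ := ih
        obtain ⟨c', hc'⟩ := ih'
        refine ⟨c + c', ?_⟩
        rw [hsplit1, map_add, hc, hc']
        simp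
    | add b b' ih ih' =>
      intro a
      obtain ⟨c, hc⟩ := ih a
      obtain ⟨c', hc'⟩ := ih' a
      refine ⟨c + c', ?_⟩
      rw [hsplit2, map_add, LinearMap.add_apply, hc, hc']
      simp
  have S2any : ∀ (b : Λ ⊗[ℂ] (V →ₗ[ℂ] I)) (y : G),
      ∃ c, Br (0, b, 0) y = (0, 0, c) := by
    rintro b ⟨a, b', c'⟩
    obtain ⟨c, hc⟩ := S21 b a
    refine ⟨c, ?_⟩
    have hy : ((a, b', c') : G) = (a, 0, 0) + (0, b', 0) + (0, 0, c') := by simp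
    rw [hy, map_add, map_add, hc, h22, h3r]
    simp
  have S12 : ∀ (a : U ⊗[ℂ] V) (b : Λ ⊗[ℂ] (V →ₗ[ℂ] I)),
      ∃ c, Br (a, 0, 0) (0, b, 0) = (0, 0, c) := by
    intro a b
    obtain ⟨c, hc⟩ := S21 b a
    refine ⟨-c, ?_⟩
    rw [hanti, hc]
    simp
  -- vanishing lemmas for the Jacobi sum
  have Ar3 : ∀ (x y : G) (c : Λ ⊗[ℂ] (I ⊗[ℂ] U)), jacSum Br x y (0, 0, c) = 0 := by
    intro x y c
    unfold jacSum
    rw [h3r, h3, map_zero, LinearMap.zero_apply, h3r c y, map_zero]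
    simp
  have Ar2 : ∀ (x : G) (c : Λ ⊗[ℂ] (I ⊗[ℂ] U)) (y : G), jacSum Br x (0, 0, c) y = 0 := by
    intro x c y
    rw [jacSum_cyc, jacSum_cyc]
    exact Ar3 _ _ _
  have Ar1 : ∀ (c : Λ ⊗[ℂ] (I ⊗[ℂ] U)) (x y : G), jacSum Br (0, 0, c) x y = 0 := by
    intro c x y
    rw [jacSum_cyc]
    exact Ar3 _ _ _
  have Aqq : ∀ (b b' : Λ ⊗[ℂ] (V →ₗ[ℂ] I)) (y : G),
      jacSum Br (0, b, 0) (0, b', 0) y = 0 := by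
    intro b b' y
    obtain ⟨c, hc⟩ := S2any b' y
    have hy : Br y (0, b, 0) = - Br (0, b, 0) y := hanti _ _
    obtain ⟨c', hc'⟩ := S2any b y
    unfold jacSum
    rw [h22, map_zero, LinearMap.zero_apply, hc, h3, hy, hc']
    have : (-((0, 0, c') : G)) = (0, 0, -c') := by simp
    rw [this, h3]
    simp
  have Apqq : ∀ (a : U ⊗[ℂ] V) (b b' : Λ ⊗[ℂ] (V →ₗ[ℂ] I)),
      jacSum Br (a, 0, 0) (0, b, 0) (0, b', 0) = 0 := by
    intro a b b'
    rw [jacSum_cyc]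
    exact Aqq _ _ _
  have Aqpq : ∀ (b : Λ ⊗[ℂ] (V →ₗ[ℂ] I)) (a : U ⊗[ℂ] V) (b' : Λ ⊗[ℂ] (V →ₗ[ℂ] I)),
      jacSum Br (0, b, 0) (a, 0, 0) (0, b', 0) = 0 := by
    intro b a b'
    rw [jacSum_cyc]
    exact Apqq _ _ _
  have Appq : ∀ (a a' : U ⊗[ℂ] V) (b : Λ ⊗[ℂ] (V →ₗ[ℂ] I)),
      jacSum Br (a, 0, 0) (a', 0, 0) (0, b, 0) = 0 := by
    intro a a' b
    obtain ⟨b'', hb''⟩ := S11 a a'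
    obtain ⟨c, hc⟩ := S12 a' b
    obtain ⟨c', hc'⟩ := S21 b a
    unfold jacSum
    rw [hb'', h22, hc, h3, hc', h3]
    simp
  have Apqp : ∀ (a : U ⊗[ℂ] V) (b : Λ ⊗[ℂ] (V →ₗ[ℂ] I)) (a' : U ⊗[ℂ] V),
      jacSum Br (a, 0, 0) (0, b, 0) (a', 0, 0) = 0 := by
    intro a b a'
    rw [jacSum_cyc, jacSum_cyc]
    exact Appq _ _ _
  have Aqpp : ∀ (b : Λ ⊗[ℂ] (V →ₗ[ℂ] I)) (a a' : U ⊗[ℂ] V),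
      jacSum Br (0, b, 0) (a, 0, 0) (a', 0, 0) = 0 := by
    intro b a a'
    rw [jacSum_cyc]
    exact Appq _ _ _
  -- the key identity in `Λ ⊗ (I ⊗ U)`
  have key : ∀ (u₁ u₂ u₃ : U) (s : I),
      wedge u₁ u₂ ⊗ₜ[ℂ] (s ⊗ₜ[ℂ] u₃) + wedge u₂ u₃ ⊗ₜ[ℂ] (s ⊗ₜ[ℂ] u₁)
        + wedge u₃ u₁ ⊗ₜ[ℂ] (s ⊗ₜ[ℂ] u₂) = 0 := by
    intro u₁ u₂ u₃ s
    set φ : Λ →ₗ[ℂ] U →ₗ[ℂ] Λ ⊗[ℂ] (I ⊗[ℂ] U) :=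
      (TensorProduct.mk ℂ Λ (I ⊗[ℂ] U)).compl₂ ((TensorProduct.mk ℂ I U) s) with hφ
    have hφ' : ∀ (l : Λ) (u : U), φ l u = l ⊗ₜ[ℂ] (s ⊗ₜ[ℂ] u) := fun l u => rfl
    rw [← hφ' (wedge u₁ u₂) u₃, ← hφ' (wedge u₂ u₃) u₁, ← hφ' (wedge u₃ u₁) u₂]
    by_cases hli : LinearIndependent ℂ ![u₁, u₂]
    · have hcard : Fintype.card (Fin 2) = finrank ℂ U := by simp [hU]
      have hspan : u₃ ∈ Submodule.span ℂ ({u₁, u₂} : Set U) := by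
        have hB := (basisOfLinearIndependentOfCardEqFinrank hli hcard).span_eq
        rw [coe_basisOfLinearIndependentOfCardEqFinrank] at hB
        have : Set.range ![u₁, u₂] = ({u₁, u₂} : Set U) := by
          simp [Matrix.range_cons, Matrix.range_empty, Set.pair_comm]
        rw [this] at hB
        rw [hB]; trivial
      obtain ⟨a, b, hab⟩ := Submodule.mem_span_pair.mp hspan
      rw [← hab]
      simp only [map_add, map_smul, LinearMap.add_apply, LinearMap.smul_apply,
        hwalt, map_zero, wanti u₂ u₁, wanti u₃ u₁, map_neg, LinearMap.neg_apply,
        LinearMap.zero_apply, neg_one_smul, smul_neg]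
      abel
    · rw [LinearIndependent.pair_iff] at hli
      push_neg at hli
      obtain ⟨a, b, hab, hne⟩ := hli
      rcases (by tauto : a ≠ 0 ∨ b ≠ 0) with ha | hb
      · have hu₁ : u₁ = (-(a⁻¹ * b)) • u₂ := by
          have h' : a • u₁ = -(b • u₂) := by
            rw [← add_eq_zero_iff_eq_neg]; exact hab
          calc u₁ = a⁻¹ • (a • u₁) := by rw [smul_smul, inv_mul_cancel₀ ha, one_smul]
          _ = (-(a⁻¹ * b)) • u₂ := by rw [h', smul_neg, smul_smul, neg_smul]
        rw [hu₁]
        simp only [map_smul, LinearMap.smul_apply, hwalt, smul_zero, map_zero,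
          wanti u₃ u₂, map_neg, LinearMap.neg_apply, LinearMap.zero_apply,
          neg_one_smul, smul_neg]
        abel
      · have hu₂ : u₂ = (-(b⁻¹ * a)) • u₁ := by
          have h' : b • u₂ = -(a • u₁) := by
            rw [← add_eq_zero_iff_eq_neg, add_comm]; exact hab
          calc u₂ = b⁻¹ • (b • u₂) := by rw [smul_smul, inv_mul_cancel₀ hb, one_smul]
          _ = (-(b⁻¹ * a)) • u₁ := by rw [h', smul_neg, smul_smul, neg_smul]
        rw [hu₂]
        simp only [map_smul, LinearMap.smul_apply, hwalt, smul_zero, map_zero,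
          wanti u₃ u₁, map_neg, LinearMap.neg_apply, LinearMap.zero_apply,
          neg_one_smul, smul_neg]
        abel
  -- the main case: three elements of `g₁`
  have Appp : ∀ a a' a'' : U ⊗[ℂ] V,
      jacSum Br (a, 0, 0) (a', 0, 0) (a'', 0, 0) = 0 := by
    intro a
    induction a using TensorProduct.induction_on with
    | zero =>
      intro a' a''
      rw [hzero1, jacSum_cyc, jacSum_cyc]
      unfold jacSum
      simp
    | tmul u₁ v₁ =>
      intro a'
      induction a' using TensorProduct.induction_on with
      | zero =>
        intro a''
        rw [hzero1, jacSum_cyc, jacSum_cyc, jacSum_cyc]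
        unfold jacSum
        simp
      | tmul u₂ v₂ =>
        intro a''
        induction a'' using TensorProduct.induction_on with
        | zero =>
          rw [hzero1]
          unfold jacSum
          simp
        | tmul u₃ v₃ =>
          unfold jacSum
          rw [h11 u₁ v₁ u₂ v₂, h21, h11 u₂ v₂ u₃ v₃, h21, h11 u₃ v₃ u₁ v₁, h21]
          have e1 : F v₂ v₃ v₁ = F v₁ v₂ v₃ := by
            rw [hFsymm23 v₂ v₃ v₁, hFsymm12 v₂ v₁]
          have e2 : F v₃ v₁ v₂ = F v₁ v₂ v₃ := by
            rw [hFsymm12 v₃ v₁, hFsymm23 v₁ v₃ v₂]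
          rw [e1, e2]
          have := key u₁ u₂ u₃ (F v₁ v₂ v₃)
          refine Prod.ext (by simp) (Prod.ext (by simp) ?_)
          simpa using this
        | add a'' b'' ih ih' =>
          rw [hsplit1, jacSum_add3, ih, ih']
          simp
      | add a' b' ih ih' =>
        intro a''
        rw [hsplit1, jacSum_add2, ih a'', ih' a'']
        simp
    | add a b ih ih' =>
      intro a' a''
      rw [hsplit1, jacSum_add1, ih a' a'', ih' a' a'']
      simp
  -- put everything together
  rintro ⟨a₁, b₁, c₁⟩ ⟨a₂, b₂, c₂⟩ ⟨a₃, b₃, c₃⟩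
  have hd : ∀ (a : U ⊗[ℂ] V) (b : Λ ⊗[ℂ] (V →ₗ[ℂ] I)) (c : Λ ⊗[ℂ] (I ⊗[ℂ] U)),
      ((a, b, c) : G) = (a, 0, 0) + (0, b, 0) + (0, 0, c) := by intros; simp
  rw [hd a₁ b₁ c₁, hd a₂ b₂ c₂, hd a₃ b₃ c₃]
  simp only [jacSum_add1, jacSum_add2, jacSum_add3, Ar1, Ar2, Ar3, Aqq, Apqq,
    Aqpq, Appq, Apqp, Aqpp, Appp, add_zero, zero_add]
end

section
/- With the graded Lie algebra g₊(F) as above, if the cubic form F : Sym³V → I is nondegenerate (i.e., the only v ∈ V with F(v, v₁, v₂) = 0 for all v₁, v₂ ∈ V is v = 0), then [g₁, g₁] = g₂. -/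
/-!
For pure tensors `[u₁ ⊗ v₁, u₂ ⊗ v₂] = (u₁ ∧ u₂) ⊗ F(v₁, v₂, ·)`, so `[g₁, g₁]` is spanned by the
tensors `λ ⊗ f` with `λ` a value of `∧` and `f` a partial evaluation `F(v₁, v₂, ·)`. The values
of `∧` span the line `Λ²U`, and, `I` being a line as well, the maps `F(v₁, v₂, ·)` span
`Hom(V, I) ≅ V*` because their common kernel is trivial by nondegeneracy of `F`. Products of
spanning sets span the tensor product, so `[g₁, g₁]` is all of `g₂`.
-/

open TensorProduct Module Submodule

section Field

variable {K V : Type*} [Field K] [AddCommGroup V] [Module K V]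

theorem Subspace.span_eq_top_of_separating [FiniteDimensional K V] {s : Set (Dual K V)}
    (hs : ∀ v : V, (∀ f ∈ s, f v = 0) → v = 0) : span K s = ⊤ := by
  have hcoann : (span K s).dualCoannihilator = ⊥ :=
    (Submodule.eq_bot_iff _).mpr fun v hv =>
      hs v fun f hf => (mem_dualCoannihilator v).mp hv f (subset_span hf)
  rw [← Subspace.dualCoannihilator_dualAnnihilator_eq (W := span K s), hcoann,
    dualAnnihilator_bot]

theorem LinearMap.span_eq_top_of_separating [FiniteDimensional K V] {I : Type*} [AddCommGroup I]
    [Module K I] (hI : finrank K I = 1) {s : Set (V →ₗ[K] I)}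
    (hs : ∀ v : V, (∀ f ∈ s, f v = 0) → v = 0) : span K s = ⊤ := by
  have : FiniteDimensional K I := Module.finite_of_finrank_eq_succ hI
  let e : I ≃ₗ[K] K := LinearEquiv.ofFinrankEq I K (by simpa using hI)
  have hspan : span K (e.congrRight '' s) = ⊤ := Subspace.span_eq_top_of_separating <| by
    rintro v hv
    exact hs v fun f hf => e.map_eq_zero_iff.mp (hv _ ⟨f, hf, rfl⟩)
  rwa [← LinearEquiv.coe_toLinearMap, span_image, Submodule.map_eq_top_iff] at hspan

theorem LinearMap.span_image2_eq_top_of_finrank_eq_one {M N P : Type*} [AddCommMonoid M]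
    [Module K M] [AddCommMonoid N] [Module K N] [AddCommGroup P] [Module K P]
    (hP : finrank K P = 1) {f : M →ₗ[K] N →ₗ[K] P} (hf : f ≠ 0) :
    span K (Set.image2 (fun m n => f m n) .univ .univ) = ⊤ := by
  obtain ⟨m, n, hmn⟩ : ∃ m n, f m n ≠ 0 := by
    by_contra! h
    exact hf (LinearMap.ext₂ h)
  refine eq_top_mono (span_mono ?_) ((finrank_eq_one_iff_of_nonzero _ hmn).mp hP)
  exact Set.singleton_subset_iff.mpr (Set.mem_image2_of_mem trivial trivial)

end Field

theorem Submodule.span_image2_tmul_eq_top {R M N : Type*} [CommSemiring R] [AddCommMonoid M]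
    [Module R M] [AddCommMonoid N] [Module R N] {s : Set M} {t : Set N}
    (hs : span R s = ⊤) (ht : span R t = ⊤) :
    span R (Set.image2 (· ⊗ₜ[R] ·) s t) = ⊤ := by
  have h := map₂_span_span R (TensorProduct.mk R M N) s t
  rw [hs, ht, map₂_mk_top_top_eq_top] at h
  exact h.symm

theorem stmt1_general
    (U V I Λ : Type*)
    [AddCommGroup U] [Module ℂ U] [AddCommGroup V] [Module ℂ V]
    [AddCommGroup I] [Module ℂ I] [AddCommGroup Λ] [Module ℂ Λ]
    [FiniteDimensional ℂ V]
    (hI : finrank ℂ I = 1) (hΛ : finrank ℂ Λ = 1)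
    (wedge : U →ₗ[ℂ] U →ₗ[ℂ] Λ)
    (hwne : wedge ≠ 0)
    (F : V →ₗ[ℂ] V →ₗ[ℂ] V →ₗ[ℂ] I)
    (hFsymm12 : ∀ v₁ v₂ : V, F v₁ v₂ = F v₂ v₁)
    (hFsymm23 : ∀ v₁ v₂ v₃ : V, F v₁ v₂ v₃ = F v₁ v₃ v₂)
    (Br : ((U ⊗[ℂ] V) × (Λ ⊗[ℂ] (V →ₗ[ℂ] I)) × (Λ ⊗[ℂ] (I ⊗[ℂ] U)))
        →ₗ[ℂ] ((U ⊗[ℂ] V) × (Λ ⊗[ℂ] (V →ₗ[ℂ] I)) × (Λ ⊗[ℂ] (I ⊗[ℂ] U)))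
        →ₗ[ℂ] ((U ⊗[ℂ] V) × (Λ ⊗[ℂ] (V →ₗ[ℂ] I)) × (Λ ⊗[ℂ] (I ⊗[ℂ] U))))
    (h11 : ∀ (u₁ : U) (v₁ : V) (u₂ : U) (v₂ : V),
      Br (u₁ ⊗ₜ[ℂ] v₁, 0, 0) (u₂ ⊗ₜ[ℂ] v₂, 0, 0)
        = (0, (wedge u₁ u₂) ⊗ₜ[ℂ] (F v₁ v₂), 0))
    -- nondegeneracy of the cubic form F
    (hFnd : ∀ v : V, (∀ v₁ v₂ : V, F v v₁ v₂ = 0) → v = 0) :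
    Submodule.span ℂ
        {x | ∃ a b : U ⊗[ℂ] V, x = Br (a, 0, 0) (b, 0, 0)}
      = Submodule.span ℂ
        {x : (U ⊗[ℂ] V) × (Λ ⊗[ℂ] (V →ₗ[ℂ] I)) × (Λ ⊗[ℂ] (I ⊗[ℂ] U)) |
          ∃ w : Λ ⊗[ℂ] (V →ₗ[ℂ] I), x = (0, w, 0)} := by
  let ι : Λ ⊗[ℂ] (V →ₗ[ℂ] I) →ₗ[ℂ] (U ⊗[ℂ] V) × (Λ ⊗[ℂ] (V →ₗ[ℂ] I)) × (Λ ⊗[ℂ] (I ⊗[ℂ] U)) :=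
    LinearMap.inr ℂ _ _ ∘ₗ LinearMap.inl ℂ _ _
  let B := Br.compl₁₂ (LinearMap.inl ℂ _ _) (LinearMap.inl ℂ _ _)
  have hB : ∀ u₁ v₁ u₂ v₂, B (u₁ ⊗ₜ v₁) (u₂ ⊗ₜ v₂) = ι (wedge u₁ u₂ ⊗ₜ F v₁ v₂) := h11
  have hF : span ℂ (Set.image2 (fun v v' => F v v') .univ .univ) = ⊤ := by
    refine LinearMap.span_eq_top_of_separating hI fun v hv => hFnd v fun v₁ v₂ => ?_
    rw [hFsymm12, hFsymm23]
    exact hv _ (Set.mem_image2_of_mem trivial trivial)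
  calc span ℂ {x | ∃ a b : U ⊗[ℂ] V, x = Br (a, 0, 0) (b, 0, 0)}
      = map₂ B ⊤ ⊤ := by
        rw [← span_univ, map₂_span_span]
        congr 1
        ext x
        simp only [Set.mem_image2, Set.mem_univ, true_and, Set.mem_ofPred_eq, eq_comm]
        rfl
    _ = map₂ B (span ℂ {t | ∃ u v, u ⊗ₜ v = t}) (span ℂ {t | ∃ u v, u ⊗ₜ v = t}) := by
        rw [span_tmul_eq_top]
    _ = span ℂ (ι '' Set.image2 (· ⊗ₜ ·) (Set.image2 (fun u u' => wedge u u') .univ .univ)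
          (Set.image2 (fun v v' => F v v') .univ .univ)) := by
        rw [map₂_span_span]
        congr 1
        ext x
        simp only [Set.mem_image2, Set.mem_univ, true_and, Set.mem_ofPred_eq, Set.mem_image,
          exists_exists_exists_and_eq, hB]
        constructor
        · rintro ⟨u₁, v₁, u₂, v₂, rfl⟩
          exact ⟨_, ⟨u₁, u₂, v₁, v₂, rfl⟩, rfl⟩
        · rintro ⟨_, ⟨u₁, u₂, v₁, v₂, rfl⟩, rfl⟩
          exact ⟨u₁, v₁, u₂, v₂, rfl⟩
    _ = LinearMap.range ι := by
        rw [span_image, span_image2_tmul_eq_top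
          (LinearMap.span_image2_eq_top_of_finrank_eq_one hΛ hwne) hF, Submodule.map_top]
    _ = _ := by
        rw [← span_eq (LinearMap.range ι)]
        congr 1
        ext x
        simp [ι, eq_comm]

/-- If the cubic form `F` is nondegenerate then `[g₁, g₁] = g₂` in the
graded Lie algebra `g₊(F)` (Definition 3.13 of the paper). -/
theorem stmt1
    (U V I Λ : Type*)
    [AddCommGroup U] [Module ℂ U] [AddCommGroup V] [Module ℂ V]
    [AddCommGroup I] [Module ℂ I] [AddCommGroup Λ] [Module ℂ Λ]
    [FiniteDimensional ℂ U] [FiniteDimensional ℂ V] [FiniteDimensional ℂ I]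
    [FiniteDimensional ℂ Λ]
    (hU : finrank ℂ U = 2) (hI : finrank ℂ I = 1) (hΛ : finrank ℂ Λ = 1)
    (wedge : U →ₗ[ℂ] U →ₗ[ℂ] Λ) (hwalt : ∀ u : U, wedge u u = 0)
    (hwne : wedge ≠ 0)
    (F : V →ₗ[ℂ] V →ₗ[ℂ] V →ₗ[ℂ] I)
    (hFsymm12 : ∀ v₁ v₂ : V, F v₁ v₂ = F v₂ v₁)
    (hFsymm23 : ∀ v₁ v₂ v₃ : V, F v₁ v₂ v₃ = F v₁ v₃ v₂)
    (Br : ((U ⊗[ℂ] V) × (Λ ⊗[ℂ] (V →ₗ[ℂ] I)) × (Λ ⊗[ℂ] (I ⊗[ℂ] U)))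
        →ₗ[ℂ] ((U ⊗[ℂ] V) × (Λ ⊗[ℂ] (V →ₗ[ℂ] I)) × (Λ ⊗[ℂ] (I ⊗[ℂ] U)))
        →ₗ[ℂ] ((U ⊗[ℂ] V) × (Λ ⊗[ℂ] (V →ₗ[ℂ] I)) × (Λ ⊗[ℂ] (I ⊗[ℂ] U))))
    (hanti : ∀ x y, Br x y = - Br y x)
    (h11 : ∀ (u₁ : U) (v₁ : V) (u₂ : U) (v₂ : V),
      Br (u₁ ⊗ₜ[ℂ] v₁, 0, 0) (u₂ ⊗ₜ[ℂ] v₂, 0, 0)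
        = (0, (wedge u₁ u₂) ⊗ₜ[ℂ] (F v₁ v₂), 0))
    (h21 : ∀ (l : Λ) (f : V →ₗ[ℂ] I) (u₃ : U) (v₃ : V),
      Br (0, l ⊗ₜ[ℂ] f, 0) (u₃ ⊗ₜ[ℂ] v₃, 0, 0)
        = (0, 0, l ⊗ₜ[ℂ] ((f v₃) ⊗ₜ[ℂ] u₃)))
    (h22 : ∀ (b b' : Λ ⊗[ℂ] (V →ₗ[ℂ] I)),
      Br (0, b, 0) (0, b', 0) = 0)
    (h3 : ∀ (c : Λ ⊗[ℂ] (I ⊗[ℂ] U)) x, Br (0, 0, c) x = 0)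
    -- nondegeneracy of the cubic form F
    (hFnd : ∀ v : V, (∀ v₁ v₂ : V, F v v₁ v₂ = 0) → v = 0) :
    Submodule.span ℂ
        {x | ∃ a b : U ⊗[ℂ] V, x = Br (a, 0, 0) (b, 0, 0)}
      = Submodule.span ℂ
        {x : (U ⊗[ℂ] V) × (Λ ⊗[ℂ] (V →ₗ[ℂ] I)) × (Λ ⊗[ℂ] (I ⊗[ℂ] U)) |
          ∃ w : Λ ⊗[ℂ] (V →ₗ[ℂ] I), x = (0, w, 0)} :=
  stmt1_general U V I Λ hI hΛ wedge hwne F hFsymm12 hFsymm23 Br h11 hFnd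
end

section
/- If F is a nondegenerate cubic form on V (dim V = m ≥ 1), then the center of the Lie algebra g₊(F) equals g₃. -/
open TensorProduct Module

lemma tmul_left_zero' {Λ M : Type*} [AddCommGroup Λ] [Module ℂ Λ]
    [AddCommGroup M] [Module ℂ M] {ι : Type*} (b : Basis ι ℂ Λ) (i : ι) (m : M)
    (h : (b i) ⊗ₜ[ℂ] m = 0) : m = 0 := by
  have := congrArg ((TensorProduct.lid ℂ M).toLinearMap ∘ₗ
      LinearMap.rTensor M (b.coord i)) h
  simpa using this

lemma tmul_right_zero' {Λ M : Type*} [AddCommGroup Λ] [Module ℂ Λ]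
    [AddCommGroup M] [Module ℂ M] {ι : Type*} (b : Basis ι ℂ Λ) (i : ι) (m : M)
    (h : m ⊗ₜ[ℂ] (b i) = 0) : m = 0 := by
  have := congrArg ((TensorProduct.rid ℂ M).toLinearMap ∘ₗ
      LinearMap.lTensor M (b.coord i)) h
  simpa using this

lemma exists_rep' {Λ M : Type*} [AddCommGroup Λ] [Module ℂ Λ]
    [AddCommGroup M] [Module ℂ M] {ι : Type*} [Fintype ι] (b : Basis ι ℂ Λ)
    (t : Λ ⊗[ℂ] M) : ∃ m : ι → M, t = ∑ i, (b i) ⊗ₜ[ℂ] (m i) := by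
  induction t using TensorProduct.induction_on with
  | zero => exact ⟨0, by simp⟩
  | tmul l v =>
      refine ⟨fun i => b.repr l i • v, ?_⟩
      conv_lhs => rw [← b.sum_repr l]
      rw [TensorProduct.sum_tmul]
      simp [TensorProduct.smul_tmul]
  | add x y hx hy =>
      obtain ⟨m, rfl⟩ := hx; obtain ⟨m', rfl⟩ := hy
      exact ⟨m + m', by simp [TensorProduct.tmul_add, Finset.sum_add_distrib]⟩

/-- If `F` is nondegenerate, the center of the Lie algebra `g₊(F)`
equals `g₃` (the elements whose `g₁`- and `g₂`-components vanish). -/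
theorem stmt3
    (U V I Λ : Type*)
    [AddCommGroup U] [Module ℂ U] [AddCommGroup V] [Module ℂ V]
    [AddCommGroup I] [Module ℂ I] [AddCommGroup Λ] [Module ℂ Λ]
    [FiniteDimensional ℂ U] [FiniteDimensional ℂ V] [FiniteDimensional ℂ I]
    [FiniteDimensional ℂ Λ]
    (hU : finrank ℂ U = 2) (hI : finrank ℂ I = 1) (hΛ : finrank ℂ Λ = 1)
    (wedge : U →ₗ[ℂ] U →ₗ[ℂ] Λ) (hwalt : ∀ u : U, wedge u u = 0)
    (hwne : wedge ≠ 0)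
    (F : V →ₗ[ℂ] V →ₗ[ℂ] V →ₗ[ℂ] I)
    (hFsymm12 : ∀ v₁ v₂ : V, F v₁ v₂ = F v₂ v₁)
    (hFsymm23 : ∀ v₁ v₂ v₃ : V, F v₁ v₂ v₃ = F v₁ v₃ v₂)
    (Br : ((U ⊗[ℂ] V) × (Λ ⊗[ℂ] (V →ₗ[ℂ] I)) × (Λ ⊗[ℂ] (I ⊗[ℂ] U)))
        →ₗ[ℂ] ((U ⊗[ℂ] V) × (Λ ⊗[ℂ] (V →ₗ[ℂ] I)) × (Λ ⊗[ℂ] (I ⊗[ℂ] U)))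
        →ₗ[ℂ] ((U ⊗[ℂ] V) × (Λ ⊗[ℂ] (V →ₗ[ℂ] I)) × (Λ ⊗[ℂ] (I ⊗[ℂ] U))))
    (hanti : ∀ x y, Br x y = - Br y x)
    (h11 : ∀ (u₁ : U) (v₁ : V) (u₂ : U) (v₂ : V),
      Br (u₁ ⊗ₜ[ℂ] v₁, 0, 0) (u₂ ⊗ₜ[ℂ] v₂, 0, 0)
        = (0, (wedge u₁ u₂) ⊗ₜ[ℂ] (F v₁ v₂), 0))
    (h21 : ∀ (l : Λ) (f : V →ₗ[ℂ] I) (u₃ : U) (v₃ : V),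
      Br (0, l ⊗ₜ[ℂ] f, 0) (u₃ ⊗ₜ[ℂ] v₃, 0, 0)
        = (0, 0, l ⊗ₜ[ℂ] ((f v₃) ⊗ₜ[ℂ] u₃)))
    (h22 : ∀ (b b' : Λ ⊗[ℂ] (V →ₗ[ℂ] I)),
      Br (0, b, 0) (0, b', 0) = 0)
    (h3 : ∀ (c : Λ ⊗[ℂ] (I ⊗[ℂ] U)) x, Br (0, 0, c) x = 0)
    (hFnd : ∀ v : V, (∀ v₁ v₂ : V, F v v₁ v₂ = 0) → v = 0) :
    ∀ x : (U ⊗[ℂ] V) × (Λ ⊗[ℂ] (V →ₗ[ℂ] I)) × (Λ ⊗[ℂ] (I ⊗[ℂ] U)),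
      (∀ y, Br x y = 0) ↔ (x.1 = 0 ∧ x.2.1 = 0) := by
  rintro ⟨a, b, c⟩
  constructor
  · intro hx
    -- bases
    have bU : Basis (Fin 2) ℂ U := finBasisOfFinrankEq ℂ U hU
    have bΛ : Basis (Fin 1) ℂ Λ := finBasisOfFinrankEq ℂ Λ hΛ
    -- antisymmetry of wedge
    have hwanti : ∀ u u' : U, wedge u u' = - wedge u' u := by
      intro u u'
      have := hwalt (u + u')
      simp only [map_add, LinearMap.add_apply, hwalt] at this
      linear_combination (norm := abel) this
    -- wedge (bU 0) (bU 1) ≠ 0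
    have hw01 : wedge (bU 0) (bU 1) ≠ 0 := by
      intro h0
      apply hwne
      apply bU.ext
      intro i
      apply bU.ext
      intro j
      fin_cases i <;> fin_cases j <;>
        simp [hwalt, h0, hwanti (bU 0) (bU 1)] <;>
        rw [hwanti] <;> simp [h0]
    -- decompose a and b
    obtain ⟨w, ha⟩ := exists_rep' bU a
    obtain ⟨f, hb⟩ := exists_rep' bΛ b
    rw [Fin.sum_univ_two] at ha
    rw [Fin.sum_univ_one] at hb
    -- key computation
    have key : ∀ (u : U) (v : V),
        ((wedge (bU 0) u) ⊗ₜ[ℂ] (F (w 0) v) + (wedge (bU 1) u) ⊗ₜ[ℂ] (F (w 1) v)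
          = (0 : Λ ⊗[ℂ] (V →ₗ[ℂ] I)))
        ∧ ((bΛ 0) ⊗ₜ[ℂ] ((f 0 v) ⊗ₜ[ℂ] u) = (0 : Λ ⊗[ℂ] (I ⊗[ℂ] U))) := by
      intro u v
      have h0 := hx (u ⊗ₜ[ℂ] v, 0, 0)
      have hdecomp : (a, b, c)
          = ((bU 0) ⊗ₜ[ℂ] w 0, 0, 0) + ((bU 1) ⊗ₜ[ℂ] w 1, 0, 0)
            + (0, (bΛ 0) ⊗ₜ[ℂ] f 0, 0) + (0, 0, c) := by
        rw [ha, hb]; simp [Prod.ext_iff]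
      rw [hdecomp] at h0
      simp only [map_add, LinearMap.add_apply, h11, h21, h3] at h0
      have h0' := h0
      rw [Prod.ext_iff, Prod.ext_iff] at h0
      simp only [Prod.fst_add, Prod.snd_add] at h0
      obtain ⟨-, h2, h3'⟩ := h0
      constructor
      · simpa using h2
      · simpa using h3'
    -- b = 0
    have hbz : b = 0 := by
      have hf : f 0 = 0 := by
        apply LinearMap.ext
        intro v
        have := (key (bU 0) v).2
        have h1 := tmul_left_zero' bΛ 0 _ this
        have h2 := tmul_right_zero' bU 0 _ h1
        simpa using h2
      rw [hb, hf]; simp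
    -- a = 0
    have hw0 : w 0 = 0 := by
      apply hFnd
      intro v₁ v₂
      have := (key (bU 1) v₁).1
      rw [hwalt (bU 1)] at this
      simp only [TensorProduct.zero_tmul, add_zero] at this
      have hb1 : Basis (Fin 1) ℂ Λ :=
        FiniteDimensional.basisSingleton (Fin 1) hΛ _ hw01
      have hF0 : F (w 0) v₁ = 0 := by
        have := tmul_left_zero' (FiniteDimensional.basisSingleton (Fin 1) hΛ _ hw01) 0 _
          (by rwa [FiniteDimensional.basisSingleton_apply])
        exact this
      rw [hF0]; simp
    have hw1 : w 1 = 0 := by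
      apply hFnd
      intro v₁ v₂
      have := (key (bU 0) v₁).1
      rw [hwalt (bU 0)] at this
      simp only [TensorProduct.zero_tmul, zero_add] at this
      have hne : wedge (bU 1) (bU 0) ≠ 0 := by
        rw [hwanti]; exact neg_ne_zero.mpr hw01
      have hF0 : F (w 1) v₁ = 0 := by
        have := tmul_left_zero' (FiniteDimensional.basisSingleton (Fin 1) hΛ _ hne) 0 _
          (by rwa [FiniteDimensional.basisSingleton_apply])
        exact this
      rw [hF0]; simp
    refine ⟨?_, hbz⟩
    rw [ha, hw0, hw1]; simp
  · rintro ⟨rfl, rfl⟩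
    intro y
    exact h3 c y
end

section
/- Let ς : Λ²(g₁ ⊕ g₂) → g₃ be the bilinear map induced by the Lie bracket of g₊(F) modulo g₁ ⊕ g₂, i.e., ς(u₁⊗v₁ + ξ₁, u₂⊗v₂ + ξ₂) = [ξ₁, u₂⊗v₂] + [u₁⊗v₁, ξ₂] for ξᵢ ∈ g₂. Then ς is independent of F, and for every nonzero linear functional a ∈ g₃*, the null space of the antisymmetric form a∘ς on g₁ ⊕ g₂ equals a^⊥ ⊗ V ⊆ g₁, where a^⊥ is the 1-dimensional subspace of U annihilated by a via the identification g₃ ≅ Λ²U ⊗ I ⊗ U. -/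
open TensorProduct Module

section Aux

variable {U V I Λ : Type*}
  [AddCommGroup U] [Module ℂ U] [AddCommGroup V] [Module ℂ V]
  [AddCommGroup I] [Module ℂ I] [AddCommGroup Λ] [Module ℂ Λ]

local notation "gP" =>
  ((U ⊗[ℂ] V) × (Λ ⊗[ℂ] (V →ₗ[ℂ] I)) × (Λ ⊗[ℂ] (I ⊗[ℂ] U)))

private lemma aux_mk0 :
    ((0 : U ⊗[ℂ] V), (0 : Λ ⊗[ℂ] (V →ₗ[ℂ] I)), (0 : Λ ⊗[ℂ] (I ⊗[ℂ] U)))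
      = (0 : gP) := rfl

private lemma aux_rank_one {R M N : Type*} [CommRing R] [AddCommGroup M] [Module R M]
    [AddCommGroup N] [Module R N]
    (l₀ : M) (hspan : ∀ l : M, ∃ c : R, l = c • l₀) (x : M ⊗[R] N) :
    ∃ n : N, x = l₀ ⊗ₜ[R] n := by
  induction x using TensorProduct.induction_on with
  | zero => exact ⟨0, by simp⟩
  | tmul l n =>
    obtain ⟨c, hc⟩ := hspan l
    exact ⟨c • n, by rw [hc, TensorProduct.smul_tmul]⟩
  | add x y hx hy =>
    obtain ⟨n, hn⟩ := hx
    obtain ⟨n', hn'⟩ := hy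
    exact ⟨n + n', by rw [hn, hn', TensorProduct.tmul_add]⟩

private lemma aux_zero11 (C : gP →ₗ[ℂ] gP →ₗ[ℂ] gP)
    (h11z : ∀ (u₁ : U) (v₁ : V) (u₂ : U) (v₂ : V),
      ((C (u₁ ⊗ₜ[ℂ] v₁, 0, 0)) (u₂ ⊗ₜ[ℂ] v₂, 0, 0)).2.2 = 0)
    (x1 y1 : U ⊗[ℂ] V) : ((C (x1, 0, 0)) (y1, 0, 0)).2.2 = 0 := by
  induction x1 using TensorProduct.induction_on with
  | zero => rw [aux_mk0, map_zero]; rfl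
  | tmul u v =>
    induction y1 using TensorProduct.induction_on with
    | zero => rw [aux_mk0, map_zero]; rfl
    | tmul u' v' => exact h11z u v u' v'
    | add p q hp hq =>
      have h' : ((p + q, 0, 0) : gP) = (p, 0, 0) + (q, 0, 0) := by simp
      rw [h', map_add, Prod.snd_add, Prod.snd_add, hp, hq, add_zero]
  | add p q hp hq =>
    have h' : ((p + q, 0, 0) : gP) = (p, 0, 0) + (q, 0, 0) := by simp
    rw [h', map_add, LinearMap.add_apply, Prod.snd_add, Prod.snd_add, hp, hq, add_zero]

private lemma aux_split (C : gP →ₗ[ℂ] gP →ₗ[ℂ] gP) (x1 y1 : U ⊗[ℂ] V)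
    (x2 y2 : Λ ⊗[ℂ] (V →ₗ[ℂ] I)) :
    (C (x1, x2, 0)) (y1, y2, 0)
      = (C (x1, 0, 0)) (y1, 0, 0) + (C (x1, 0, 0)) (0, y2, 0)
        + (C (0, x2, 0)) (y1, 0, 0) + (C (0, x2, 0)) (0, y2, 0) := by
  have hx : ((x1, x2, 0) : gP) = (x1, 0, 0) + (0, x2, 0) := by simp
  have hy : ((y1, y2, 0) : gP) = (y1, 0, 0) + (0, y2, 0) := by simp
  rw [hx, hy]
  simp only [map_add, LinearMap.add_apply]
  abel

private lemma aux_sform (C : gP →ₗ[ℂ] gP →ₗ[ℂ] gP)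
    (hanti : ∀ x y, C x y = - C y x)
    (h11z : ∀ (u₁ : U) (v₁ : V) (u₂ : U) (v₂ : V),
      ((C (u₁ ⊗ₜ[ℂ] v₁, 0, 0)) (u₂ ⊗ₜ[ℂ] v₂, 0, 0)).2.2 = 0)
    (h22 : ∀ b b' : Λ ⊗[ℂ] (V →ₗ[ℂ] I), (C (0, b, 0)) (0, b', 0) = 0)
    (x1 y1 : U ⊗[ℂ] V) (x2 y2 : Λ ⊗[ℂ] (V →ₗ[ℂ] I)) :
    ((C (x1, x2, 0)) (y1, y2, 0)).2.2
      = ((C (0, x2, 0)) (y1, 0, 0)).2.2 - ((C (0, y2, 0)) (x1, 0, 0)).2.2 := by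
  rw [aux_split, hanti (x1, 0, 0) (0, y2, 0), h22]
  have h0 := aux_zero11 C h11z x1 y1
  simp only [Prod.snd_add, Prod.snd_neg, Prod.snd_zero, h0, add_zero, zero_add]
  abel

private lemma aux_eq21 (C C' : gP →ₗ[ℂ] gP →ₗ[ℂ] gP)
    (h21 : ∀ (l : Λ) (f : V →ₗ[ℂ] I) (u₃ : U) (v₃ : V),
      (C (0, l ⊗ₜ[ℂ] f, 0)) (u₃ ⊗ₜ[ℂ] v₃, 0, 0)
        = (0, 0, l ⊗ₜ[ℂ] ((f v₃) ⊗ₜ[ℂ] u₃)))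
    (h21' : ∀ (l : Λ) (f : V →ₗ[ℂ] I) (u₃ : U) (v₃ : V),
      (C' (0, l ⊗ₜ[ℂ] f, 0)) (u₃ ⊗ₜ[ℂ] v₃, 0, 0)
        = (0, 0, l ⊗ₜ[ℂ] ((f v₃) ⊗ₜ[ℂ] u₃)))
    (x2 : Λ ⊗[ℂ] (V →ₗ[ℂ] I)) (y1 : U ⊗[ℂ] V) :
    (C (0, x2, 0)) (y1, 0, 0) = (C' (0, x2, 0)) (y1, 0, 0) := by
  induction x2 using TensorProduct.induction_on with
  | zero => rw [aux_mk0, map_zero, map_zero]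
  | tmul l f =>
    induction y1 using TensorProduct.induction_on with
    | zero => rw [aux_mk0, map_zero, map_zero]
    | tmul u v => rw [h21, h21']
    | add p q hp hq =>
      have h' : ((p + q, 0, 0) : gP) = (p, 0, 0) + (q, 0, 0) := by simp
      rw [h', map_add, map_add, hp, hq]
  | add p q hp hq =>
    have h' : (((0 : U ⊗[ℂ] V), p + q, 0) : gP) = (0, p, 0) + (0, q, 0) := by simp
    rw [h', map_add, map_add, LinearMap.add_apply, LinearMap.add_apply, hp, hq]

end Aux

/-- Lemma 4.5 of the paper.  Let `ς : Λ²(g₁ ⊕ g₂) → g₃` be the bracket of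
`g₊(F)` modulo `g₁ ⊕ g₂`, i.e. the `g₃`-component of the bracket of two
elements of `g₁ ⊕ g₂`.  Then `ς` is independent of the cubic form `F`
(first conclusion: two bracket structures with cubics `F`, `F'` have the
same `g₃`-component on `g₁ ⊕ g₂`), and for every nonzero `a ∈ g₃*` the
null space of the antisymmetric form `a∘ς` equals `a^⊥ ⊗ V ⊆ g₁`, where
`a^⊥ ⊂ U` is the subspace of `U` annihilated by `a` via the
identification `g₃ ≅ Λ²U ⊗ I ⊗ U`. -/
theorem stmt8
    (U V I Λ : Type*)
    [AddCommGroup U] [Module ℂ U] [AddCommGroup V] [Module ℂ V]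
    [AddCommGroup I] [Module ℂ I] [AddCommGroup Λ] [Module ℂ Λ]
    [FiniteDimensional ℂ U] [FiniteDimensional ℂ V] [FiniteDimensional ℂ I]
    [FiniteDimensional ℂ Λ]
    (hU : finrank ℂ U = 2) (hI : finrank ℂ I = 1) (hΛ : finrank ℂ Λ = 1)
    (wedge : U →ₗ[ℂ] U →ₗ[ℂ] Λ) (hwalt : ∀ u : U, wedge u u = 0)
    (hwne : wedge ≠ 0)
    (F : V →ₗ[ℂ] V →ₗ[ℂ] V →ₗ[ℂ] I)
    (hFsymm12 : ∀ v₁ v₂ : V, F v₁ v₂ = F v₂ v₁)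
    (hFsymm23 : ∀ v₁ v₂ v₃ : V, F v₁ v₂ v₃ = F v₁ v₃ v₂)
    (Br : ((U ⊗[ℂ] V) × (Λ ⊗[ℂ] (V →ₗ[ℂ] I)) × (Λ ⊗[ℂ] (I ⊗[ℂ] U)))
        →ₗ[ℂ] ((U ⊗[ℂ] V) × (Λ ⊗[ℂ] (V →ₗ[ℂ] I)) × (Λ ⊗[ℂ] (I ⊗[ℂ] U)))
        →ₗ[ℂ] ((U ⊗[ℂ] V) × (Λ ⊗[ℂ] (V →ₗ[ℂ] I)) × (Λ ⊗[ℂ] (I ⊗[ℂ] U))))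
    (hanti : ∀ x y, Br x y = - Br y x)
    (h11 : ∀ (u₁ : U) (v₁ : V) (u₂ : U) (v₂ : V),
      Br (u₁ ⊗ₜ[ℂ] v₁, 0, 0) (u₂ ⊗ₜ[ℂ] v₂, 0, 0)
        = (0, (wedge u₁ u₂) ⊗ₜ[ℂ] (F v₁ v₂), 0))
    (h21 : ∀ (l : Λ) (f : V →ₗ[ℂ] I) (u₃ : U) (v₃ : V),
      Br (0, l ⊗ₜ[ℂ] f, 0) (u₃ ⊗ₜ[ℂ] v₃, 0, 0)
        = (0, 0, l ⊗ₜ[ℂ] ((f v₃) ⊗ₜ[ℂ] u₃)))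
    (h22 : ∀ (b b' : Λ ⊗[ℂ] (V →ₗ[ℂ] I)),
      Br (0, b, 0) (0, b', 0) = 0)
    (h3 : ∀ (c : Λ ⊗[ℂ] (I ⊗[ℂ] U)) x, Br (0, 0, c) x = 0)
    -- a second bracket structure, built from a possibly different cubic F'
    (F' : V →ₗ[ℂ] V →ₗ[ℂ] V →ₗ[ℂ] I)
    (hFsymm12' : ∀ v₁ v₂ : V, F' v₁ v₂ = F' v₂ v₁)
    (hFsymm23' : ∀ v₁ v₂ v₃ : V, F' v₁ v₂ v₃ = F' v₁ v₃ v₂)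
    (Br' : ((U ⊗[ℂ] V) × (Λ ⊗[ℂ] (V →ₗ[ℂ] I)) × (Λ ⊗[ℂ] (I ⊗[ℂ] U)))
        →ₗ[ℂ] ((U ⊗[ℂ] V) × (Λ ⊗[ℂ] (V →ₗ[ℂ] I)) × (Λ ⊗[ℂ] (I ⊗[ℂ] U)))
        →ₗ[ℂ] ((U ⊗[ℂ] V) × (Λ ⊗[ℂ] (V →ₗ[ℂ] I)) × (Λ ⊗[ℂ] (I ⊗[ℂ] U))))
    (hanti' : ∀ x y, Br' x y = - Br' y x)
    (h11' : ∀ (u₁ : U) (v₁ : V) (u₂ : U) (v₂ : V),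
      Br' (u₁ ⊗ₜ[ℂ] v₁, 0, 0) (u₂ ⊗ₜ[ℂ] v₂, 0, 0)
        = (0, (wedge u₁ u₂) ⊗ₜ[ℂ] (F' v₁ v₂), 0))
    (h21' : ∀ (l : Λ) (f : V →ₗ[ℂ] I) (u₃ : U) (v₃ : V),
      Br' (0, l ⊗ₜ[ℂ] f, 0) (u₃ ⊗ₜ[ℂ] v₃, 0, 0)
        = (0, 0, l ⊗ₜ[ℂ] ((f v₃) ⊗ₜ[ℂ] u₃)))
    (h22' : ∀ (b b' : Λ ⊗[ℂ] (V →ₗ[ℂ] I)),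
      Br' (0, b, 0) (0, b', 0) = 0)
    (h3' : ∀ (c : Λ ⊗[ℂ] (I ⊗[ℂ] U)) x, Br' (0, 0, c) x = 0) :
    -- ς is independent of F
    (∀ x y, x.2.2 = 0 → y.2.2 = 0 → (Br x y).2.2 = (Br' x y).2.2) ∧
    -- Null(a∘ς) = a^⊥ ⊗ V
    (∀ a : (Λ ⊗[ℂ] (I ⊗[ℂ] U)) →ₗ[ℂ] ℂ, a ≠ 0 →
      ∀ x : (U ⊗[ℂ] V) × (Λ ⊗[ℂ] (V →ₗ[ℂ] I)) × (Λ ⊗[ℂ] (I ⊗[ℂ] U)),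
        (x.2.2 = 0 ∧ ∀ y, y.2.2 = 0 → a ((Br x y).2.2) = 0)
          ↔ (x.2.1 = 0 ∧ x.2.2 = 0 ∧
              x.1 ∈ Submodule.span ℂ
                {t : U ⊗[ℂ] V | ∃ (u : U) (v : V),
                  (∀ (l : Λ) (j : I), a (l ⊗ₜ[ℂ] (j ⊗ₜ[ℂ] u)) = 0) ∧
                  t = u ⊗ₜ[ℂ] v})) := by
  classical
  have h11z : ∀ (u₁ : U) (v₁ : V) (u₂ : U) (v₂ : V),
      ((Br (u₁ ⊗ₜ[ℂ] v₁, 0, 0)) (u₂ ⊗ₜ[ℂ] v₂, 0, 0)).2.2 = 0 := by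
    intro u₁ v₁ u₂ v₂; rw [h11]
  have h11z' : ∀ (u₁ : U) (v₁ : V) (u₂ : U) (v₂ : V),
      ((Br' (u₁ ⊗ₜ[ℂ] v₁, 0, 0)) (u₂ ⊗ₜ[ℂ] v₂, 0, 0)).2.2 = 0 := by
    intro u₁ v₁ u₂ v₂; rw [h11']
  constructor
  · -- independence of F
    intro x y hx hy
    obtain ⟨x1, x2, x3⟩ := x
    obtain ⟨y1, y2, y3⟩ := y
    change x3 = 0 at hx
    change y3 = 0 at hy
    subst hx; subst hy
    show ((Br (x1, x2, 0)) (y1, y2, 0)).2.2 = ((Br' (x1, x2, 0)) (y1, y2, 0)).2.2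
    rw [aux_sform Br hanti h11z h22, aux_sform Br' hanti' h11z' h22',
        aux_eq21 Br Br' h21 h21' x2 y1, aux_eq21 Br Br' h21 h21' y2 x1]
  · -- null space computation
    intro a ha x
    obtain ⟨x1, x2, x3⟩ := x
    dsimp only
    -- basis data for Λ and I
    obtain ⟨l₀, coL, hLdec, hL0⟩ :
        ∃ (l₀ : Λ) (coL : Λ →ₗ[ℂ] ℂ), (∀ l, l = coL l • l₀) ∧ coL l₀ = 1 := by
      set b := Module.finBasisOfFinrankEq ℂ Λ hΛ with hb
      refine ⟨b 0, b.coord 0, fun l => ?_, by simp⟩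
      have h := b.sum_repr l
      rw [Fin.sum_univ_one] at h
      simpa [Basis.coord_apply] using h.symm
    obtain ⟨j₀, coI, hIdec, hI0⟩ :
        ∃ (j₀ : I) (coI : I →ₗ[ℂ] ℂ), (∀ j, j = coI j • j₀) ∧ coI j₀ = 1 := by
      set b := Module.finBasisOfFinrankEq ℂ I hI with hb
      refine ⟨b 0, b.coord 0, fun j => ?_, by simp⟩
      have h := b.sum_repr j
      rw [Fin.sum_univ_one] at h
      simpa [Basis.coord_apply] using h.symm
    obtain ⟨abar, habar⟩ : ∃ abar : U →ₗ[ℂ] ℂ,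
        ∀ u, abar u = a (l₀ ⊗ₜ[ℂ] (j₀ ⊗ₜ[ℂ] u)) :=
      ⟨a ∘ₗ (TensorProduct.mk ℂ Λ (I ⊗[ℂ] U) l₀) ∘ₗ (TensorProduct.mk ℂ I U j₀),
        fun u => rfl⟩
    have hform : ∀ (l : Λ) (j : I) (u : U),
        a (l ⊗ₜ[ℂ] (j ⊗ₜ[ℂ] u)) = coL l * (coI j * abar u) := by
      intro l j u
      conv_lhs => rw [hLdec l, hIdec j]
      simp only [← smul_tmul', TensorProduct.tmul_smul, map_smul, smul_eq_mul,
        ← habar]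
      ring
    have hane : ∃ u₀ : U, abar u₀ ≠ 0 := by
      by_contra h
      push_neg at h
      apply ha
      apply LinearMap.ext
      intro z
      rw [LinearMap.zero_apply]
      induction z using TensorProduct.induction_on with
      | zero => simp
      | tmul l w =>
        induction w using TensorProduct.induction_on with
        | zero => simp
        | tmul j u => rw [hform, h u, mul_zero, mul_zero]
        | add p q hp hq => rw [TensorProduct.tmul_add, map_add, hp, hq, add_zero]
      | add p q hp hq => rw [map_add, hp, hq, add_zero]
    obtain ⟨m, hmdef⟩ : ∃ m : U ⊗[ℂ] V →ₗ[ℂ] V, ∀ u v, m (u ⊗ₜ[ℂ] v) = abar u • v :=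
      ⟨TensorProduct.lift ((LinearMap.lsmul ℂ V) ∘ₗ abar), fun u v => rfl⟩
    have hTval : ∀ (l : Λ) (f : V →ₗ[ℂ] I) (z : U ⊗[ℂ] V),
        a (((Br (0, l ⊗ₜ[ℂ] f, 0)) (z, 0, 0)).2.2) = coL l * coI (f (m z)) := by
      intro l f z
      induction z using TensorProduct.induction_on with
      | zero =>
        rw [aux_mk0, map_zero]
        simp
      | tmul u v =>
        rw [h21]
        show a (l ⊗ₜ[ℂ] (f v ⊗ₜ[ℂ] u)) = _
        rw [hform, hmdef, map_smul, map_smul, smul_eq_mul]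
        ring
      | add p q hp hq =>
        have h' : ((p + q, 0, 0) :
            (U ⊗[ℂ] V) × (Λ ⊗[ℂ] (V →ₗ[ℂ] I)) × (Λ ⊗[ℂ] (I ⊗[ℂ] U)))
            = (p, 0, 0) + (q, 0, 0) := by simp
        rw [h', map_add, Prod.snd_add, Prod.snd_add, map_add, hp, hq,
            map_add, map_add, map_add, mul_add]
    constructor
    · rintro ⟨hx3, hnull⟩
      subst hx3
      have hA1 : ∀ y1 : U ⊗[ℂ] V, a (((Br (0, x2, 0)) (y1, 0, 0)).2.2) = 0 := by
        intro y1
        have h := hnull (y1, 0, 0) rfl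
        rw [aux_sform Br hanti h11z h22] at h
        simpa only [aux_mk0, map_zero, LinearMap.zero_apply, Prod.snd_zero,
          sub_zero] using h
      have hA2 : ∀ y2 : Λ ⊗[ℂ] (V →ₗ[ℂ] I),
          a (((Br (0, y2, 0)) (x1, 0, 0)).2.2) = 0 := by
        intro y2
        have h := hnull (0, y2, 0) rfl
        rw [aux_sform Br hanti h11z h22] at h
        simpa only [aux_mk0, map_zero, LinearMap.zero_apply, Prod.snd_zero,
          zero_sub, map_neg, neg_eq_zero] using h
      obtain ⟨u₀, hu₀⟩ := hane
      obtain ⟨f₂, hf₂⟩ := aux_rank_one l₀ (fun l => ⟨coL l, hLdec l⟩) x2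
      have hf₂0 : f₂ = 0 := by
        apply LinearMap.ext
        intro v
        have h := hA1 (u₀ ⊗ₜ[ℂ] v)
        rw [hf₂, h21] at h
        have h' : a (l₀ ⊗ₜ[ℂ] (f₂ v ⊗ₜ[ℂ] u₀)) = 0 := h
        rw [hform, hL0, one_mul] at h'
        have hc : coI (f₂ v) = 0 := by
          rcases mul_eq_zero.mp h' with h'' | h''
          · exact h''
          · exact absurd h'' hu₀
        have hd := hIdec (f₂ v)
        rw [hc, zero_smul] at hd
        simpa using hd
      have hx2 : x2 = 0 := by rw [hf₂, hf₂0, TensorProduct.tmul_zero]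
      have hm0 : m x1 = 0 := by
        apply (Module.forall_dual_apply_eq_zero_iff ℂ (m x1)).mp
        intro φ
        have h := hA2 (l₀ ⊗ₜ[ℂ] (φ.smulRight j₀))
        rw [hTval, hL0, one_mul, LinearMap.smulRight_apply, map_smul,
            smul_eq_mul, hI0, mul_one] at h
        exact h
      obtain ⟨u₁, hu₁⟩ : ∃ u₁ : U, abar u₁ = 1 :=
        ⟨(abar u₀)⁻¹ • u₀, by rw [map_smul, smul_eq_mul, inv_mul_cancel₀ hu₀]⟩
      obtain ⟨p, hpap⟩ : ∃ p : U →ₗ[ℂ] U, ∀ u, p u = u - abar u • u₁ :=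
        ⟨LinearMap.id - abar.smulRight u₁, fun u => rfl⟩
      have hp0 : ∀ u, abar (p u) = 0 := by
        intro u
        rw [hpap, map_sub, map_smul, smul_eq_mul, hu₁, mul_one, sub_self]
      have hdecomp : ∀ z : U ⊗[ℂ] V,
          z = (LinearMap.rTensor V p) z + u₁ ⊗ₜ[ℂ] m z := by
        intro z
        induction z using TensorProduct.induction_on with
        | zero => simp
        | tmul u v =>
          rw [LinearMap.rTensor_tmul, hmdef, hpap, TensorProduct.sub_tmul,
              TensorProduct.smul_tmul]
          abel
        | add z w hz hw =>
          calc z + w = ((LinearMap.rTensor V p) z + u₁ ⊗ₜ[ℂ] m z)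
                + ((LinearMap.rTensor V p) w + u₁ ⊗ₜ[ℂ] m w) := by rw [← hz, ← hw]
            _ = _ := by
                rw [map_add (LinearMap.rTensor V p), map_add m,
                  TensorProduct.tmul_add]
                abel
      have hx1eq : x1 = (LinearMap.rTensor V p) x1 := by
        have h := hdecomp x1
        rwa [hm0, TensorProduct.tmul_zero, add_zero] at h
      have hmem : ∀ z : U ⊗[ℂ] V, (LinearMap.rTensor V p) z ∈
          Submodule.span ℂ {t : U ⊗[ℂ] V | ∃ (u : U) (v : V),
            (∀ (l : Λ) (j : I), a (l ⊗ₜ[ℂ] (j ⊗ₜ[ℂ] u)) = 0) ∧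
            t = u ⊗ₜ[ℂ] v} := by
        intro z
        induction z using TensorProduct.induction_on with
        | zero => rw [map_zero]; exact Submodule.zero_mem _
        | tmul u v =>
          rw [LinearMap.rTensor_tmul]
          apply Submodule.subset_span
          exact ⟨p u, v, fun l j => by rw [hform, hp0 u, mul_zero, mul_zero], rfl⟩
        | add z w hz hw => rw [map_add]; exact Submodule.add_mem _ hz hw
      refine ⟨hx2, rfl, ?_⟩
      rw [hx1eq]
      exact hmem x1
    · rintro ⟨hx2, hx3, hx1⟩
      subst hx2; subst hx3
      refine ⟨rfl, ?_⟩
      intro y hy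
      obtain ⟨y1, y2, y3⟩ := y
      change y3 = 0 at hy
      subst hy
      show a (((Br (x1, 0, 0)) (y1, y2, 0)).2.2) = 0
      rw [aux_sform Br hanti h11z h22]
      simp only [aux_mk0, map_zero, LinearMap.zero_apply, Prod.snd_zero,
        zero_sub, map_neg, neg_eq_zero]
      induction hx1 using Submodule.span_induction with
      | mem t ht =>
        obtain ⟨u, v, hann, rfl⟩ := ht
        induction y2 using TensorProduct.induction_on with
        | zero => rw [aux_mk0, map_zero]; simp
        | tmul l f =>
          rw [h21]
          exact hann l (f v)
        | add p q hp hq =>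
          have h' : (((0 : U ⊗[ℂ] V), p + q, 0) :
              (U ⊗[ℂ] V) × (Λ ⊗[ℂ] (V →ₗ[ℂ] I)) × (Λ ⊗[ℂ] (I ⊗[ℂ] U)))
              = (0, p, 0) + (0, q, 0) := by simp
          rw [h', map_add, LinearMap.add_apply, Prod.snd_add, Prod.snd_add,
              map_add, hp, hq, add_zero]
      | zero =>
        have h' : (((0 : U ⊗[ℂ] V), (0 : Λ ⊗[ℂ] (V →ₗ[ℂ] I)),
            (0 : Λ ⊗[ℂ] (I ⊗[ℂ] U)))) = 0 := rfl
        rw [h', map_zero]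
        simp
      | add z w hz hw hz' hw' =>
        have h' : ((z + w, 0, 0) :
            (U ⊗[ℂ] V) × (Λ ⊗[ℂ] (V →ₗ[ℂ] I)) × (Λ ⊗[ℂ] (I ⊗[ℂ] U)))
            = (z, 0, 0) + (w, 0, 0) := by simp
        rw [h', map_add, Prod.snd_add, Prod.snd_add, map_add, hz', hw', add_zero]
      | smul c z hz hz' =>
        have h' : ((c • z, 0, 0) :
            (U ⊗[ℂ] V) × (Λ ⊗[ℂ] (V →ₗ[ℂ] I)) × (Λ ⊗[ℂ] (I ⊗[ℂ] U)))
            = c • (z, 0, 0) := by simp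
        rw [h', map_smul, Prod.smul_snd, Prod.smul_snd, map_smul, hz',
            smul_zero]
end

section
/- With notation as in the previous statement, for a given nonzero a ∈ g₃*, the null space of a∘ς has dimension m. -/
/-!
Write `x = (p, b, 0)` and `y = (q, b', 0)`. The brackets `[g₁, g₁]` and `[g₂, g₂]` have no
`g₃`-component, so by antisymmetry `a ∘ ς (x, y) = K(b, q) - K(b', p)` with
`K(b, p) = a [b, p]₃`. After trivialising the lines `Λ` and `I`, `K(b, p) = ⟨E b, β p⟩` where
`E : Λ ⊗ Hom(V, I) ≃ V*` and `β = α ⊗ id : U ⊗ V → V` for the nonzero functional `α` on `U`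
induced by `a`. As `β` is onto, `x` is null iff `b = 0` and `β p = 0`, so the null space is
`ker β = ker α ⊗ V`, of dimension `2m - m = m`.
-/

open TensorProduct Module

section

variable {k : Type*} [Field k]

section Pairing

variable {M N V : Type*} [AddCommGroup M] [Module k M] [AddCommGroup N] [Module k N]
  [AddCommGroup V] [Module k V]

theorem LinearMap.compl₂_apply_eq_zero_iff_of_surjective (E : M ≃ₗ[k] Dual k V)
    {β : N →ₗ[k] V} (hβ : Function.Surjective β) (b : M) :
    E.toLinearMap.compl₂ β b = 0 ↔ b = 0 := by
  refine ⟨fun h => E.map_eq_zero_iff.mp ?_, fun h => by simp [h]⟩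
  ext v
  obtain ⟨p, rfl⟩ := hβ v
  exact LinearMap.congr_fun h p

theorem LinearMap.flip_compl₂_apply_eq_zero_iff (E : M ≃ₗ[k] Dual k V) (β : N →ₗ[k] V)
    (p : N) : (E.toLinearMap.compl₂ β).flip p = 0 ↔ β p = 0 := by
  rw [← forall_dual_apply_eq_zero_iff k (β p), E.surjective.forall, LinearMap.ext_iff]
  rfl

theorem Submodule.finrank_prod_bot (p : Submodule k M) :
    finrank k (p.prod (⊥ : Submodule k N)) = finrank k p := by
  rw [← Submodule.map_inl]
  exact (p.equivMapOfInjective _ LinearMap.inl_injective).finrank_eq.symm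

end Pairing

section OneDimensional

variable {Λ I U V : Type*} [AddCommGroup Λ] [Module k Λ] [AddCommGroup I] [Module k I]
  [AddCommGroup U] [Module k U] [AddCommGroup V] [Module k V]
  (eΛ : Λ ≃ₗ[k] k) (eI : I ≃ₗ[k] k)

noncomputable def tensorHomEquivDual : Λ ⊗[k] (V →ₗ[k] I) ≃ₗ[k] Dual k V :=
  TensorProduct.congr eΛ (LinearEquiv.congrRight eI) ≪≫ₗ TensorProduct.lid k _

@[simp]
theorem tensorHomEquivDual_tmul_apply (l : Λ) (f : V →ₗ[k] I) (v : V) :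
    tensorHomEquivDual eΛ eI (l ⊗ₜ f) v = eΛ l * eI (f v) := by
  simp only [tensorHomEquivDual, LinearEquiv.trans_apply, congr_tmul, lid_tmul,
    LinearMap.smul_apply, smul_eq_mul]
  rfl

noncomputable def tensorTensorEquiv : Λ ⊗[k] (I ⊗[k] U) ≃ₗ[k] U :=
  TensorProduct.congr eΛ (TensorProduct.congr eI (LinearEquiv.refl k U)
    ≪≫ₗ TensorProduct.lid k U) ≪≫ₗ TensorProduct.lid k U

@[simp]
theorem tensorTensorEquiv_tmul (l : Λ) (i : I) (u : U) :
    tensorTensorEquiv eΛ eI (l ⊗ₜ (i ⊗ₜ u)) = (eΛ l * eI i) • u := by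
  simp [tensorTensorEquiv, mul_smul, smul_comm (eI _)]

end OneDimensional

section Bracket

variable {g₁ g₂ g₃ : Type*} [AddCommGroup g₁] [Module k g₁] [AddCommGroup g₂] [Module k g₂]
  [AddCommGroup g₃] [Module k g₃]

def bracketPairing (Br : g₁ × g₂ × g₃ →ₗ[k] g₁ × g₂ × g₃ →ₗ[k] g₁ × g₂ × g₃)
    (a : g₃ →ₗ[k] k) : g₂ →ₗ[k] g₁ →ₗ[k] k :=
  ((Br ∘ₗ LinearMap.inr k g₁ (g₂ × g₃) ∘ₗ LinearMap.inl k g₂ g₃).compl₂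
    (LinearMap.inl k g₁ (g₂ × g₃))).compr₂
    (a ∘ₗ LinearMap.snd k g₂ g₃ ∘ₗ LinearMap.snd k g₁ (g₂ × g₃))

theorem bracketPairing_apply (Br : g₁ × g₂ × g₃ →ₗ[k] g₁ × g₂ × g₃ →ₗ[k] g₁ × g₂ × g₃)
    (a : g₃ →ₗ[k] k) (b : g₂) (p : g₁) :
    bracketPairing Br a b p = a (Br (0, b, 0) (p, 0, 0)).2.2 :=
  rfl

variable {Br : g₁ × g₂ × g₃ →ₗ[k] g₁ × g₂ × g₃ →ₗ[k] g₁ × g₂ × g₃}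

theorem apply_bracket_eq_bracketPairing_sub (a : g₃ →ₗ[k] k) (hanti : ∀ x y, Br x y = - Br y x)
    (h11 : ∀ p q : g₁, (Br (p, 0, 0) (q, 0, 0)).2.2 = 0)
    (h22 : ∀ b b' : g₂, Br (0, b, 0) (0, b', 0) = 0) {x y : g₁ × g₂ × g₃}
    (hx : x.2.2 = 0) (hy : y.2.2 = 0) :
    a (Br x y).2.2 = bracketPairing Br a x.2.1 y.1 - bracketPairing Br a y.2.1 x.1 := by
  obtain ⟨p, b, c⟩ := x
  obtain ⟨q, b', c'⟩ := y
  dsimp only at hx hy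
  subst hx hy
  have hsplit (r : g₁) (d : g₂) : ((r, d, 0) : g₁ × g₂ × g₃) = (r, 0, 0) + (0, d, 0) := by
    simp
  conv_lhs => rw [hsplit p, hsplit q]
  simp only [map_add, LinearMap.add_apply, Prod.snd_add, h11, h22]
  rw [hanti (p, 0, 0) (0, b', 0)]
  simp [bracketPairing_apply, sub_eq_add_neg]

theorem forall_apply_bracket_eq_zero_iff (a : g₃ →ₗ[k] k) (hanti : ∀ x y, Br x y = - Br y x)
    (h11 : ∀ p q : g₁, (Br (p, 0, 0) (q, 0, 0)).2.2 = 0)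
    (h22 : ∀ b b' : g₂, Br (0, b, 0) (0, b', 0) = 0) (x : g₁ × g₂ × g₃) :
    (x.2.2 = 0 ∧ ∀ y, y.2.2 = 0 → a ((Br x y).2.2) = 0) ↔
      x.2.2 = 0 ∧ bracketPairing Br a x.2.1 = 0 ∧ (bracketPairing Br a).flip x.1 = 0 := by
  refine and_congr_right fun hx => ⟨fun h => ⟨?_, ?_⟩, fun ⟨h₁, h₂⟩ y hy => ?_⟩
  · ext q
    simpa [apply_bracket_eq_bracketPairing_sub a hanti h11 h22 hx] using h (q, 0, 0) rfl
  · ext b'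
    simpa [apply_bracket_eq_bracketPairing_sub a hanti h11 h22 hx] using h (0, b', 0) rfl
  · rw [apply_bracket_eq_bracketPairing_sub a hanti h11 h22 hx hy, h₁]
    simpa using LinearMap.congr_fun h₂ y.2.1

end Bracket

section TensorBracket

variable {U V I Λ g₂ g₃ : Type*} [AddCommGroup U] [Module k U] [AddCommGroup V] [Module k V]
  [AddCommGroup I] [Module k I] [AddCommGroup Λ] [Module k Λ]
  [AddCommGroup g₂] [Module k g₂] [AddCommGroup g₃] [Module k g₃]

theorem bracket_snd_snd_eq_zero_of_tmul
    {Br : (U ⊗[k] V) × g₂ × g₃ →ₗ[k] (U ⊗[k] V) × g₂ × g₃ →ₗ[k] (U ⊗[k] V) × g₂ × g₃}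
    (h : ∀ u₁ v₁ u₂ v₂, (Br (u₁ ⊗ₜ v₁, 0, 0) (u₂ ⊗ₜ v₂, 0, 0)).2.2 = 0) (p q : U ⊗[k] V) :
    (Br (p, 0, 0) (q, 0, 0)).2.2 = 0 := by
  let inl := LinearMap.inl k (U ⊗[k] V) (g₂ × g₃)
  have hB : ((Br ∘ₗ inl).compl₂ inl).compr₂
      (LinearMap.snd k g₂ g₃ ∘ₗ LinearMap.snd k (U ⊗[k] V) (g₂ × g₃)) = 0 := by
    ext u₁ v₁ u₂ v₂
    exact h u₁ v₁ u₂ v₂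
  exact LinearMap.congr_fun (LinearMap.congr_fun hB p) q

theorem bracketPairing_eq_compl₂ (eΛ : Λ ≃ₗ[k] k) (eI : I ≃ₗ[k] k)
    {Br : (U ⊗[k] V) × (Λ ⊗[k] (V →ₗ[k] I)) × (Λ ⊗[k] (I ⊗[k] U)) →ₗ[k]
      (U ⊗[k] V) × (Λ ⊗[k] (V →ₗ[k] I)) × (Λ ⊗[k] (I ⊗[k] U)) →ₗ[k]
      (U ⊗[k] V) × (Λ ⊗[k] (V →ₗ[k] I)) × (Λ ⊗[k] (I ⊗[k] U))}
    (h21 : ∀ l f u v, Br (0, l ⊗ₜ f, 0) (u ⊗ₜ v, 0, 0) = (0, 0, l ⊗ₜ (f v ⊗ₜ u)))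
    (a : Λ ⊗[k] (I ⊗[k] U) →ₗ[k] k) :
    bracketPairing Br a = (tensorHomEquivDual eΛ eI).toLinearMap.compl₂
      ((TensorProduct.lid k V).toLinearMap ∘ₗ
        (a ∘ₗ (tensorTensorEquiv eΛ eI).symm.toLinearMap).rTensor V) := by
  ext l f u v
  have hpure : a (l ⊗ₜ (f v ⊗ₜ u)) = a ((tensorTensorEquiv eΛ eI).symm
      ((eΛ l * eI (f v)) • u)) := by
    rw [← tensorTensorEquiv_tmul, LinearEquiv.symm_apply_apply]
  simp [bracketPairing_apply, h21, hpure]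
  ring

end TensorBracket

end

theorem stmt9_general
    (U V I Λ : Type*)
    [AddCommGroup U] [Module ℂ U] [AddCommGroup V] [Module ℂ V]
    [AddCommGroup I] [Module ℂ I] [AddCommGroup Λ] [Module ℂ Λ]
    [FiniteDimensional ℂ U] [FiniteDimensional ℂ V] [FiniteDimensional ℂ I]
    [FiniteDimensional ℂ Λ]
    (hU : finrank ℂ U = 2) (hI : finrank ℂ I = 1) (hΛ : finrank ℂ Λ = 1)
    (wedge : U →ₗ[ℂ] U →ₗ[ℂ] Λ)
    (F : V →ₗ[ℂ] V →ₗ[ℂ] V →ₗ[ℂ] I)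
    (Br : ((U ⊗[ℂ] V) × (Λ ⊗[ℂ] (V →ₗ[ℂ] I)) × (Λ ⊗[ℂ] (I ⊗[ℂ] U)))
        →ₗ[ℂ] ((U ⊗[ℂ] V) × (Λ ⊗[ℂ] (V →ₗ[ℂ] I)) × (Λ ⊗[ℂ] (I ⊗[ℂ] U)))
        →ₗ[ℂ] ((U ⊗[ℂ] V) × (Λ ⊗[ℂ] (V →ₗ[ℂ] I)) × (Λ ⊗[ℂ] (I ⊗[ℂ] U))))
    (hanti : ∀ x y, Br x y = - Br y x)
    (h11 : ∀ (u₁ : U) (v₁ : V) (u₂ : U) (v₂ : V),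
      Br (u₁ ⊗ₜ[ℂ] v₁, 0, 0) (u₂ ⊗ₜ[ℂ] v₂, 0, 0)
        = (0, (wedge u₁ u₂) ⊗ₜ[ℂ] (F v₁ v₂), 0))
    (h21 : ∀ (l : Λ) (f : V →ₗ[ℂ] I) (u₃ : U) (v₃ : V),
      Br (0, l ⊗ₜ[ℂ] f, 0) (u₃ ⊗ₜ[ℂ] v₃, 0, 0)
        = (0, 0, l ⊗ₜ[ℂ] ((f v₃) ⊗ₜ[ℂ] u₃)))
    (h22 : ∀ (b b' : Λ ⊗[ℂ] (V →ₗ[ℂ] I)),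
      Br (0, b, 0) (0, b', 0) = 0)
    (m : ℕ) (hV : finrank ℂ V = m)
    (a : (Λ ⊗[ℂ] (I ⊗[ℂ] U)) →ₗ[ℂ] ℂ) (ha : a ≠ 0) :
    ∃ N : Submodule ℂ
        ((U ⊗[ℂ] V) × (Λ ⊗[ℂ] (V →ₗ[ℂ] I)) × (Λ ⊗[ℂ] (I ⊗[ℂ] U))),
      (∀ x, x ∈ N ↔
        (x.2.2 = 0 ∧ ∀ y, y.2.2 = 0 → a ((Br x y).2.2) = 0)) ∧
      finrank ℂ N = m := by
  let eΛ := LinearEquiv.ofFinrankEq Λ ℂ (hΛ.trans (finrank_self ℂ).symm)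
  let eI := LinearEquiv.ofFinrankEq I ℂ (hI.trans (finrank_self ℂ).symm)
  set α := a ∘ₗ (tensorTensorEquiv eΛ eI (U := U)).symm.toLinearMap
  have hα : α ≠ 0 := fun h => ha <| LinearMap.ext fun t => by
    simpa [α] using LinearMap.congr_fun h (tensorTensorEquiv eΛ eI t)
  set β := (TensorProduct.lid ℂ V).toLinearMap ∘ₗ α.rTensor V
  have hβ : Function.Surjective β :=
    (TensorProduct.lid ℂ V).surjective.comp
      (LinearMap.rTensor_surjective V (LinearMap.surjective_of_ne_zero hα))
  have hP := bracketPairing_eq_compl₂ eΛ eI h21 a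
  refine ⟨(LinearMap.ker β).prod ⊥, fun x => ?_, ?_⟩
  · rw [forall_apply_bracket_eq_zero_iff a hanti
        (bracket_snd_snd_eq_zero_of_tmul (by simp [h11])) h22, hP,
      LinearMap.compl₂_apply_eq_zero_iff_of_surjective _ hβ,
      LinearMap.flip_compl₂_apply_eq_zero_iff]
    simp only [β, LinearEquiv.ker_comp, Submodule.mem_prod, LinearMap.mem_ker,
      Submodule.mem_bot, Prod.ext_iff, Prod.fst_zero, Prod.snd_zero, LinearMap.coe_comp,
      LinearEquiv.coe_coe, Function.comp_apply, EmbeddingLike.map_eq_zero_iff]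
    tauto
  · have hrank := LinearMap.finrank_range_add_finrank_ker β
    rw [LinearMap.range_eq_top.mpr hβ, finrank_top, finrank_tensorProduct, hU, hV] at hrank
    rw [Submodule.finrank_prod_bot]
    omega

/-- For a nonzero `a ∈ g₃*`, the null space of the antisymmetric form
`a∘ς` on `g₁ ⊕ g₂` (where `ς` is the bracket of `g₊(F)` modulo
`g₁ ⊕ g₂`) has dimension `m = dim V`. -/
theorem stmt9
    (U V I Λ : Type*)
    [AddCommGroup U] [Module ℂ U] [AddCommGroup V] [Module ℂ V]
    [AddCommGroup I] [Module ℂ I] [AddCommGroup Λ] [Module ℂ Λ]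
    [FiniteDimensional ℂ U] [FiniteDimensional ℂ V] [FiniteDimensional ℂ I]
    [FiniteDimensional ℂ Λ]
    (hU : finrank ℂ U = 2) (hI : finrank ℂ I = 1) (hΛ : finrank ℂ Λ = 1)
    (wedge : U →ₗ[ℂ] U →ₗ[ℂ] Λ) (hwalt : ∀ u : U, wedge u u = 0)
    (hwne : wedge ≠ 0)
    (F : V →ₗ[ℂ] V →ₗ[ℂ] V →ₗ[ℂ] I)
    (hFsymm12 : ∀ v₁ v₂ : V, F v₁ v₂ = F v₂ v₁)
    (hFsymm23 : ∀ v₁ v₂ v₃ : V, F v₁ v₂ v₃ = F v₁ v₃ v₂)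
    (Br : ((U ⊗[ℂ] V) × (Λ ⊗[ℂ] (V →ₗ[ℂ] I)) × (Λ ⊗[ℂ] (I ⊗[ℂ] U)))
        →ₗ[ℂ] ((U ⊗[ℂ] V) × (Λ ⊗[ℂ] (V →ₗ[ℂ] I)) × (Λ ⊗[ℂ] (I ⊗[ℂ] U)))
        →ₗ[ℂ] ((U ⊗[ℂ] V) × (Λ ⊗[ℂ] (V →ₗ[ℂ] I)) × (Λ ⊗[ℂ] (I ⊗[ℂ] U))))
    (hanti : ∀ x y, Br x y = - Br y x)
    (h11 : ∀ (u₁ : U) (v₁ : V) (u₂ : U) (v₂ : V),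
      Br (u₁ ⊗ₜ[ℂ] v₁, 0, 0) (u₂ ⊗ₜ[ℂ] v₂, 0, 0)
        = (0, (wedge u₁ u₂) ⊗ₜ[ℂ] (F v₁ v₂), 0))
    (h21 : ∀ (l : Λ) (f : V →ₗ[ℂ] I) (u₃ : U) (v₃ : V),
      Br (0, l ⊗ₜ[ℂ] f, 0) (u₃ ⊗ₜ[ℂ] v₃, 0, 0)
        = (0, 0, l ⊗ₜ[ℂ] ((f v₃) ⊗ₜ[ℂ] u₃)))
    (h22 : ∀ (b b' : Λ ⊗[ℂ] (V →ₗ[ℂ] I)),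
      Br (0, b, 0) (0, b', 0) = 0)
    (h3 : ∀ (c : Λ ⊗[ℂ] (I ⊗[ℂ] U)) x, Br (0, 0, c) x = 0)
    (m : ℕ) (hV : finrank ℂ V = m)
    (a : (Λ ⊗[ℂ] (I ⊗[ℂ] U)) →ₗ[ℂ] ℂ) (ha : a ≠ 0) :
    ∃ N : Submodule ℂ
        ((U ⊗[ℂ] V) × (Λ ⊗[ℂ] (V →ₗ[ℂ] I)) × (Λ ⊗[ℂ] (I ⊗[ℂ] U))),
      (∀ x, x ∈ N ↔
        (x.2.2 = 0 ∧ ∀ y, y.2.2 = 0 → a ((Br x y).2.2) = 0)) ∧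
      finrank ℂ N = m :=
  stmt9_general U V I Λ hU hI hΛ wedge F Br hanti h11 h21 h22 m hV a ha
end

section
/- In the Lie algebra g₊(F) with F nondegenerate, the derived subalgebra [g₊, g₊] equals g₂ ⊕ g₃, and the second term of the lower central series [g₊, [g₊, g₊]] equals g₃. -/
open TensorProduct Module

/-- In a 1-dimensional space, every element is a scalar multiple of a fixed
nonzero element. -/
lemma aux_one_dim_rep {Λ : Type*} [AddCommGroup Λ] [Module ℂ Λ]
    [FiniteDimensional ℂ Λ] (hΛ : finrank ℂ Λ = 1) {l₁ : Λ} (h : l₁ ≠ 0)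
    (l : Λ) : ∃ c : ℂ, l = c • l₁ := by
  have hsp : Submodule.span ℂ {l₁} = ⊤ :=
    Submodule.eq_top_of_finrank_eq (by rw [finrank_span_singleton h, hΛ])
  have hmem : l ∈ Submodule.span ℂ {l₁} := hsp ▸ Submodule.mem_top
  obtain ⟨c, hc⟩ := Submodule.mem_span_singleton.mp hmem
  exact ⟨c, hc.symm⟩

/-- Every element of `Λ ⊗ X` with `Λ` 1-dimensional is a pure tensor
`l₁ ⊗ x`. -/
lemma aux_tensor_one_dim_rep {Λ X : Type*} [AddCommGroup Λ] [Module ℂ Λ]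
    [AddCommGroup X] [Module ℂ X] [FiniteDimensional ℂ Λ]
    (hΛ : finrank ℂ Λ = 1) {l₁ : Λ} (h : l₁ ≠ 0)
    (t : Λ ⊗[ℂ] X) : ∃ x : X, t = l₁ ⊗ₜ[ℂ] x := by
  induction t using TensorProduct.induction_on with
  | zero => exact ⟨0, by simp⟩
  | tmul l x =>
    obtain ⟨c, hc⟩ := aux_one_dim_rep hΛ h l
    exact ⟨c • x, by rw [hc, TensorProduct.smul_tmul]⟩
  | add s t hs ht =>
    obtain ⟨x, hx⟩ := hs
    obtain ⟨y, hy⟩ := ht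
    exact ⟨x + y, by rw [hx, hy, TensorProduct.tmul_add]⟩

/-- Nondegeneracy of `F` implies the maps `F v₁ v₂` span `V →ₗ I`. -/
lemma aux_span_F_top {V I : Type*} [AddCommGroup V] [Module ℂ V]
    [AddCommGroup I] [Module ℂ I] [FiniteDimensional ℂ V]
    [FiniteDimensional ℂ I] (hI : finrank ℂ I = 1)
    (F : V →ₗ[ℂ] V →ₗ[ℂ] V →ₗ[ℂ] I)
    (hFsymm12 : ∀ v₁ v₂ : V, F v₁ v₂ = F v₂ v₁)
    (hFsymm23 : ∀ v₁ v₂ v₃ : V, F v₁ v₂ v₃ = F v₁ v₃ v₂)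
    (hFnd : ∀ v : V, (∀ v₁ v₂ : V, F v v₁ v₂ = 0) → v = 0) :
    Submodule.span ℂ {f : V →ₗ[ℂ] I | ∃ v₁ v₂, f = F v₁ v₂} = ⊤ := by
  -- a nonzero element of `I`
  have : Nontrivial I := by
    refine Module.nontrivial_of_finrank_pos (R := ℂ) ?_
    rw [hI]; norm_num
  obtain ⟨i₁, hi₁⟩ := exists_ne (0 : I)
  have hsp : Submodule.span ℂ {i₁} = ⊤ :=
    Submodule.eq_top_of_finrank_eq (by rw [finrank_span_singleton hi₁, hI])
  let e : ℂ ≃ₗ[ℂ] I :=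
    (LinearEquiv.toSpanNonzeroSingleton ℂ I i₁ hi₁).trans
      (LinearEquiv.ofTop _ hsp)
  let E : (V →ₗ[ℂ] I) ≃ₗ[ℂ] Module.Dual ℂ V :=
    LinearEquiv.arrowCongr (LinearEquiv.refl ℂ V) e.symm
  set S : Set (V →ₗ[ℂ] I) := {f : V →ₗ[ℂ] I | ∃ v₁ v₂, f = F v₁ v₂} with hS
  set W' : Subspace ℂ (Module.Dual ℂ V) :=
    (Submodule.span ℂ S).map E.toLinearMap with hW'
  have hco : W'.dualCoannihilator = ⊥ := by
    rw [eq_bot_iff]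
    intro v hv
    rw [Submodule.mem_dualCoannihilator] at hv
    rw [Submodule.mem_bot]
    apply hFnd
    intro v₁ v₂
    have hmem : E.toLinearMap (F v₁ v₂) ∈ W' :=
      Submodule.mem_map_of_mem (Submodule.subset_span ⟨v₁, v₂, rfl⟩)
    have h0 : E.toLinearMap (F v₁ v₂) v = 0 := hv _ hmem
    have h1 : e.symm (F v₁ v₂ v) = 0 := h0
    have h2 : F v₁ v₂ v = 0 := by
      rwa [LinearEquiv.map_eq_zero_iff] at h1
    calc F v v₁ v₂ = F v₁ v v₂ := by rw [hFsymm12 v v₁]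
      _ = F v₁ v₂ v := hFsymm23 v₁ v v₂
      _ = 0 := h2
  have htop' : W' = ⊤ := by
    rw [← Subspace.dualCoannihilator_dualAnnihilator_eq (W := W'), hco,
      Submodule.dualAnnihilator_bot]
  have hinj := Submodule.map_injective_of_injective
    (f := E.toLinearMap) E.injective
  apply hinj
  rw [Submodule.map_top, LinearEquiv.range]
  exact htop'

set_option maxHeartbeats 1600000 in
/-- For `F` nondegenerate, the derived subalgebra `[g₊, g₊]` of
`g₊(F)` equals `g₂ ⊕ g₃`, and `[g₊, [g₊, g₊]]` equals `g₃`. -/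
theorem stmt17
    (U V I Λ : Type*)
    [AddCommGroup U] [Module ℂ U] [AddCommGroup V] [Module ℂ V]
    [AddCommGroup I] [Module ℂ I] [AddCommGroup Λ] [Module ℂ Λ]
    [FiniteDimensional ℂ U] [FiniteDimensional ℂ V] [FiniteDimensional ℂ I]
    [FiniteDimensional ℂ Λ]
    (hU : finrank ℂ U = 2) (hI : finrank ℂ I = 1) (hΛ : finrank ℂ Λ = 1)
    (wedge : U →ₗ[ℂ] U →ₗ[ℂ] Λ) (hwalt : ∀ u : U, wedge u u = 0)
    (hwne : wedge ≠ 0)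
    (F : V →ₗ[ℂ] V →ₗ[ℂ] V →ₗ[ℂ] I)
    (hFsymm12 : ∀ v₁ v₂ : V, F v₁ v₂ = F v₂ v₁)
    (hFsymm23 : ∀ v₁ v₂ v₃ : V, F v₁ v₂ v₃ = F v₁ v₃ v₂)
    (Br : ((U ⊗[ℂ] V) × (Λ ⊗[ℂ] (V →ₗ[ℂ] I)) × (Λ ⊗[ℂ] (I ⊗[ℂ] U)))
        →ₗ[ℂ] ((U ⊗[ℂ] V) × (Λ ⊗[ℂ] (V →ₗ[ℂ] I)) × (Λ ⊗[ℂ] (I ⊗[ℂ] U)))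
        →ₗ[ℂ] ((U ⊗[ℂ] V) × (Λ ⊗[ℂ] (V →ₗ[ℂ] I)) × (Λ ⊗[ℂ] (I ⊗[ℂ] U))))
    (hanti : ∀ x y, Br x y = - Br y x)
    (h11 : ∀ (u₁ : U) (v₁ : V) (u₂ : U) (v₂ : V),
      Br (u₁ ⊗ₜ[ℂ] v₁, 0, 0) (u₂ ⊗ₜ[ℂ] v₂, 0, 0)
        = (0, (wedge u₁ u₂) ⊗ₜ[ℂ] (F v₁ v₂), 0))
    (h21 : ∀ (l : Λ) (f : V →ₗ[ℂ] I) (u₃ : U) (v₃ : V),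
      Br (0, l ⊗ₜ[ℂ] f, 0) (u₃ ⊗ₜ[ℂ] v₃, 0, 0)
        = (0, 0, l ⊗ₜ[ℂ] ((f v₃) ⊗ₜ[ℂ] u₃)))
    (h22 : ∀ (b b' : Λ ⊗[ℂ] (V →ₗ[ℂ] I)),
      Br (0, b, 0) (0, b', 0) = 0)
    (h3 : ∀ (c : Λ ⊗[ℂ] (I ⊗[ℂ] U)) x, Br (0, 0, c) x = 0)
    (m : ℕ) (hm : 1 ≤ m) (hV : finrank ℂ V = m)
    (hFnd : ∀ v : V, (∀ v₁ v₂ : V, F v v₁ v₂ = 0) → v = 0) :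
    (Submodule.span ℂ {w | ∃ x y, w = Br x y}
      = Submodule.span ℂ
          {w : (U ⊗[ℂ] V) × (Λ ⊗[ℂ] (V →ₗ[ℂ] I)) × (Λ ⊗[ℂ] (I ⊗[ℂ] U)) |
            w.1 = 0}) ∧
    (Submodule.span ℂ {w | ∃ x y z, w = Br x (Br y z)}
      = Submodule.span ℂ
          {w : (U ⊗[ℂ] V) × (Λ ⊗[ℂ] (V →ₗ[ℂ] I)) × (Λ ⊗[ℂ] (I ⊗[ℂ] U)) |
            w.1 = 0 ∧ w.2.1 = 0}) := by
  have h21' : ∀ (l : Λ) (f : V →ₗ[ℂ] I) (u₃ : U) (v₃ : V),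
      Br (0, l ⊗ₜ[ℂ] f, 0)
        (u₃ ⊗ₜ[ℂ] v₃, (0 : (Λ ⊗[ℂ] (V →ₗ[ℂ] I)) × (Λ ⊗[ℂ] (I ⊗[ℂ] U))))
        = (0, 0, l ⊗ₜ[ℂ] ((f v₃) ⊗ₜ[ℂ] u₃)) := h21
  -- L1: the first component of any bracket vanishes
  have hT1 : Br.compr₂ (LinearMap.fst ℂ (U ⊗[ℂ] V)
      ((Λ ⊗[ℂ] (V →ₗ[ℂ] I)) × (Λ ⊗[ℂ] (I ⊗[ℂ] U)))) = 0 := by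
    ext
    all_goals simp only [LinearMap.compr₂_apply, LinearMap.zero_comp,
      LinearMap.comp_apply, LinearMap.inl_apply, LinearMap.inr_apply,
      TensorProduct.AlgebraTensorModule.curry_apply,
      LinearMap.coe_restrictScalars, TensorProduct.curry_apply,
      LinearMap.fst_apply, LinearMap.zero_apply, Prod.fst_zero, map_zero]
    all_goals first
      | exact congrArg Prod.fst (h11 _ _ _ _)
      | exact congrArg Prod.fst (h21 _ _ _ _)
      | exact congrArg Prod.fst (h22 _ _)
      | exact congrArg Prod.fst (h3 _ _)
      | (rw [hanti]; simp [h21', h22, h3])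
  have L1 : ∀ x y : (U ⊗[ℂ] V) × (Λ ⊗[ℂ] (V →ₗ[ℂ] I)) × (Λ ⊗[ℂ] (I ⊗[ℂ] U)),
      (Br x y).1 = 0 := fun x y =>
    LinearMap.congr_fun (LinearMap.congr_fun hT1 x) y
  -- L2 : brackets with second argument in g₂ ⊕ g₃ land in g₃
  have hT2 : ((Br.flip.comp (LinearMap.inr ℂ (U ⊗[ℂ] V)
      ((Λ ⊗[ℂ] (V →ₗ[ℂ] I)) × (Λ ⊗[ℂ] (I ⊗[ℂ] U))))).compr₂
      ((LinearMap.fst ℂ (U ⊗[ℂ] V)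
          ((Λ ⊗[ℂ] (V →ₗ[ℂ] I)) × (Λ ⊗[ℂ] (I ⊗[ℂ] U)))).prod
        ((LinearMap.fst ℂ (Λ ⊗[ℂ] (V →ₗ[ℂ] I)) (Λ ⊗[ℂ] (I ⊗[ℂ] U))).comp
          (LinearMap.snd ℂ (U ⊗[ℂ] V)
            ((Λ ⊗[ℂ] (V →ₗ[ℂ] I)) × (Λ ⊗[ℂ] (I ⊗[ℂ] U))))))) = 0 := by
    ext
    all_goals simp only [LinearMap.compr₂_apply, LinearMap.zero_comp,
      LinearMap.comp_apply, LinearMap.inl_apply, LinearMap.inr_apply,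
      LinearMap.flip_apply, LinearMap.prod_apply, Pi.prod,
      TensorProduct.AlgebraTensorModule.curry_apply,
      LinearMap.coe_restrictScalars, TensorProduct.curry_apply,
      LinearMap.fst_apply, LinearMap.snd_apply, LinearMap.zero_apply,
      Prod.fst_zero, Prod.snd_zero, map_zero]
    all_goals first
      | exact congrArg Prod.fst (h22 _ _)
      | exact congrArg Prod.fst (h3 _ _)
      | exact congrArg (fun z => z.2.1) (h22 _ _)
      | exact congrArg (fun z => z.2.1) (h3 _ _)
      | (rw [hanti]; simp [h21', h22, h3])
  have L2 : ∀ (x : (U ⊗[ℂ] V) × (Λ ⊗[ℂ] (V →ₗ[ℂ] I)) × (Λ ⊗[ℂ] (I ⊗[ℂ] U)))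
      (p : (Λ ⊗[ℂ] (V →ₗ[ℂ] I)) × (Λ ⊗[ℂ] (I ⊗[ℂ] U))),
      (Br x (0, p)).1 = 0 ∧ (Br x (0, p)).2.1 = 0 := by
    intro x p
    have h := LinearMap.congr_fun (LinearMap.congr_fun hT2 p) x
    exact ⟨congrArg Prod.fst h, congrArg Prod.snd h⟩
  -- nonzero elements
  have hwex : ∃ u₁ u₂ : U, wedge u₁ u₂ ≠ 0 := by
    by_contra h
    push_neg at h
    apply hwne
    ext u₁ u₂
    simpa using h u₁ u₂
  obtain ⟨u₁, u₂, hl₁⟩ := hwex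
  have hVnt : Nontrivial V := by
    refine Module.nontrivial_of_finrank_pos (R := ℂ) ?_
    rw [hV]; omega
  obtain ⟨v₀, hv₀⟩ := exists_ne (0 : V)
  have hFex : ∃ vA vB, F v₀ vA vB ≠ 0 := by
    by_contra h
    push_neg at h
    exact hv₀ (hFnd v₀ h)
  obtain ⟨vA, vB, hi₁⟩ := hFex
  constructor
  · -- first statement
    have hRHS : Submodule.span ℂ
        {w : (U ⊗[ℂ] V) × (Λ ⊗[ℂ] (V →ₗ[ℂ] I)) × (Λ ⊗[ℂ] (I ⊗[ℂ] U)) |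
          w.1 = 0}
        = Submodule.prod ⊥ ⊤ := by
      have hs : {w : (U ⊗[ℂ] V) × (Λ ⊗[ℂ] (V →ₗ[ℂ] I)) × (Λ ⊗[ℂ] (I ⊗[ℂ] U)) |
          w.1 = 0} = ↑(Submodule.prod (⊥ : Submodule ℂ (U ⊗[ℂ] V))
            (⊤ : Submodule ℂ ((Λ ⊗[ℂ] (V →ₗ[ℂ] I)) × (Λ ⊗[ℂ] (I ⊗[ℂ] U))))) := by
        ext w
        simp only [Set.mem_setOf_eq, SetLike.mem_coe, Submodule.mem_prod,
          Submodule.mem_bot, Submodule.mem_top, and_true]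
      rw [hs, Submodule.span_eq]
    rw [hRHS]
    apply le_antisymm
    · rw [Submodule.span_le]
      rintro w ⟨x, y, rfl⟩
      simp only [SetLike.mem_coe, Submodule.mem_prod, Submodule.mem_bot,
        Submodule.mem_top, and_true]
      exact L1 x y
    · intro w hw
      rw [Submodule.mem_prod, Submodule.mem_bot] at hw
      have hw1 : w.1 = 0 := hw.1
      have hdec : w = (0, w.2.1, 0) + (0, 0, w.2.2) := by
        ext <;> simp [hw1]
      rw [hdec]
      apply Submodule.add_mem
      · -- g₂ part
        obtain ⟨g, hg⟩ := aux_tensor_one_dim_rep hΛ hl₁ w.2.1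
        rw [hg]
        let φ : (V →ₗ[ℂ] I) →ₗ[ℂ]
            (U ⊗[ℂ] V) × (Λ ⊗[ℂ] (V →ₗ[ℂ] I)) × (Λ ⊗[ℂ] (I ⊗[ℂ] U)) :=
          (LinearMap.inr ℂ (U ⊗[ℂ] V)
              ((Λ ⊗[ℂ] (V →ₗ[ℂ] I)) × (Λ ⊗[ℂ] (I ⊗[ℂ] U)))).comp
            ((LinearMap.inl ℂ (Λ ⊗[ℂ] (V →ₗ[ℂ] I)) (Λ ⊗[ℂ] (I ⊗[ℂ] U))).comp
              (TensorProduct.mk ℂ Λ (V →ₗ[ℂ] I) (wedge u₁ u₂)))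
        have hφ : φ g = (0, (wedge u₁ u₂) ⊗ₜ[ℂ] g, 0) := rfl
        have hgtop : g ∈ Submodule.span ℂ
            {f : V →ₗ[ℂ] I | ∃ v₁ v₂, f = F v₁ v₂} := by
          rw [aux_span_F_top hI F hFsymm12 hFsymm23 hFnd]
          trivial
        have himg : φ g ∈ (Submodule.span ℂ
            {f : V →ₗ[ℂ] I | ∃ v₁ v₂, f = F v₁ v₂}).map φ :=
          Submodule.mem_map_of_mem hgtop
        rw [Submodule.map_span] at himg
        have hsub : φ '' {f : V →ₗ[ℂ] I | ∃ v₁ v₂, f = F v₁ v₂}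
            ⊆ {w : (U ⊗[ℂ] V) × (Λ ⊗[ℂ] (V →ₗ[ℂ] I)) × (Λ ⊗[ℂ] (I ⊗[ℂ] U)) |
                ∃ x y, w = Br x y} := by
          rintro - ⟨f, ⟨v₁, v₂, rfl⟩, rfl⟩
          refine ⟨(u₁ ⊗ₜ[ℂ] v₁, 0, 0), (u₂ ⊗ₜ[ℂ] v₂, 0, 0), ?_⟩
          rw [h11]
          rfl
        rw [← hφ]
        exact Submodule.span_mono hsub himg
      · -- g₃ part
        obtain ⟨t, ht⟩ := aux_tensor_one_dim_rep hΛ hl₁ w.2.2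
        obtain ⟨u, hu⟩ := aux_tensor_one_dim_rep hI hi₁ t
        apply Submodule.subset_span
        refine ⟨(0, (wedge u₁ u₂) ⊗ₜ[ℂ] (F v₀ vA), 0), (u ⊗ₜ[ℂ] vB, 0, 0), ?_⟩
        rw [h21, ht, hu]
  · -- second statement
    have hRHS : Submodule.span ℂ
        {w : (U ⊗[ℂ] V) × (Λ ⊗[ℂ] (V →ₗ[ℂ] I)) × (Λ ⊗[ℂ] (I ⊗[ℂ] U)) |
          w.1 = 0 ∧ w.2.1 = 0}
        = Submodule.prod ⊥ (Submodule.prod ⊥ ⊤) := by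
      have hs : {w : (U ⊗[ℂ] V) × (Λ ⊗[ℂ] (V →ₗ[ℂ] I)) × (Λ ⊗[ℂ] (I ⊗[ℂ] U)) |
          w.1 = 0 ∧ w.2.1 = 0}
          = ↑(Submodule.prod (⊥ : Submodule ℂ (U ⊗[ℂ] V))
              (Submodule.prod (⊥ : Submodule ℂ (Λ ⊗[ℂ] (V →ₗ[ℂ] I)))
                (⊤ : Submodule ℂ (Λ ⊗[ℂ] (I ⊗[ℂ] U))))) := by
        ext w
        simp only [Set.mem_setOf_eq, SetLike.mem_coe, Submodule.mem_prod,
          Submodule.mem_bot, Submodule.mem_top, and_true]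
      rw [hs, Submodule.span_eq]
    rw [hRHS]
    apply le_antisymm
    · rw [Submodule.span_le]
      rintro w ⟨x, y, z, rfl⟩
      have hyz : Br y z = (0, (Br y z).2) :=
        Prod.ext_iff.mpr ⟨L1 y z, rfl⟩
      simp only [SetLike.mem_coe, Submodule.mem_prod, Submodule.mem_bot,
        Submodule.mem_top, and_true]
      constructor
      · exact L1 x (Br y z)
      · rw [hyz]
        exact (L2 x (Br y z).2).2
    · intro w hw
      rw [Submodule.mem_prod, Submodule.mem_bot, Submodule.mem_prod,
        Submodule.mem_bot] at hw
      have hdec : w = (0, 0, w.2.2) := by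
        ext <;> simp [hw.1, hw.2.1]
      rw [hdec]
      obtain ⟨t, ht⟩ := aux_tensor_one_dim_rep hΛ hl₁ w.2.2
      obtain ⟨u, hu⟩ := aux_tensor_one_dim_rep hI hi₁ t
      apply Submodule.subset_span
      refine ⟨((-u) ⊗ₜ[ℂ] vB, 0, 0), (u₁ ⊗ₜ[ℂ] v₀, 0, 0),
        (u₂ ⊗ₜ[ℂ] vA, 0, 0), ?_⟩
      rw [h11, hanti, h21, ht, hu]
      simp [TensorProduct.tmul_neg, Prod.ext_iff]
end
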